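/- Let Θ be a DTAS which self-assembles the pattern Q using at most m_b = 1 black tile types and m_g = 2k + 3 gray tile types. Then: the unique black tile type has the same glue • on all four edges; the gray tile types are exactly k horizontal counter tiles (north and south glue •, west glue i, east glue i−1, for i ∈ [k]), k vertical counter tiles (east and west glue •, south glue i, north glue i−1, for i ∈ [k]), a tile F₁ (north and south glue ♦, east and west glue •), a tile F₂ (east and west glue ♦, north and south glue •), and a tile G (all four glues ♦); Θ contains white tile types D₁ (east and west glue •, south glue 0, north glue ♦) and D₂ (north and south glue •, west glue 0, east glue ♦); in every supertile the horizontal and vertical color counters are implemented by the counter tiles and the positions labelled E, D₁, D₂, F₁, F₂, G carry the correspondingly named tile types; and the glues •, ♦, 0, 1, …, k are pairwise distinct. (All of this holds up to a bijective renaming of horizontal glues and of vertical glues.) -/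
import Mathlib


/-- A colored Wang tile with a color and four glues (north, east, south, west). -/
structure Tile (C G : Type) where
  color : C
  north : G
  east : G
  south : G
  west : G
deriving DecidableEq

/-- A rectilinear tile assembly system: a finite set of tile types together with
an L-shaped seed, given by its north glues (bottom arm) and east glues (left arm). -/
structure RTAS (C G : Type) where
  tiles : Finset (Tile C G)
  seedN : ℕ → G
  seedE : ℕ → G

/-- A tile assignment for the `M × N` rectangle spanned by the seed:
every tile belongs to the system, west/south glues match the east/north glues of the
west/south neighbours, and the seed glues on the boundary. -/
def IsAssignment {C G : Type} (T : RTAS C G) (M N : ℕ) (f : ℕ → ℕ → Tile C G) : Prop :=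
  (∀ x < M, ∀ y < N, f x y ∈ T.tiles) ∧
  (∀ y < N, (f 0 y).west = T.seedE y) ∧
  (∀ x < M, (f x 0).south = T.seedN x) ∧
  (∀ x, x + 1 < M → ∀ y < N, (f (x + 1) y).west = (f x y).east) ∧
  (∀ x < M, ∀ y, y + 1 < N → (f x (y + 1)).south = (f x y).north)

/-- `T` self-assembles the `M × N` pattern `P` if some tile assignment realizes `P`. -/
def SelfAssembles {C G : Type} (T : RTAS C G) (M N : ℕ) (P : ℕ → ℕ → C) : Prop :=
  ∃ f, IsAssignment T M N f ∧ ∀ x < M, ∀ y < N, (f x y).color = P x y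

/-- A directed RTAS: distinct tile types differ in their south or west glue. -/
def DirectedTAS {C G : Type} (T : RTAS C G) : Prop :=
  ∀ t₁ ∈ T.tiles, ∀ t₂ ∈ T.tiles, t₁ ≠ t₂ → t₁.south ≠ t₂.south ∨ t₁.west ≠ t₂.west

/-- The set of colors occurring in the `M × N` pattern `P`. -/
def colorsOf {C : Type} [DecidableEq C] (M N : ℕ) (P : ℕ → ℕ → C) : Finset C :=
  (Finset.range M ×ˢ Finset.range N).image fun q => P q.1 q.2

/-- The named colors used in the subpatterns of the pattern `P_F` of the paper.
`uniq n` are the "unique" filler colors. -/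
inductive PColor where
  | orC | plus | minus
  | Z1 | Z2 | Z3 | Z4
  | aC | bW | bD | cW | cD | dC
  | arrW (w : Fin 2)
  | arrD (w : Fin 2)
  | upW (s : Fin 2)
  | upD (s : Fin 2)
  | gate (i : Fin 4)
  | X (i : Fin 8)
  | Y (i : Fin 8)
  | varW (v : ℕ)
  | negW (v : ℕ)
  | varAux (v : ℕ)
  | varMod (v : ℕ)
  | varModd (v : ℕ)
  | uniq (n : ℕ)
deriving DecidableEq

/-- The `16 × 2` subpattern `p`: eight `2 × 2` blocks, block `i` having colors
`Xᵢ` (bottom-left), `OR` (bottom-right, top-left) and `Yᵢ` (top-right). -/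
def pPat : ℕ → ℕ → PColor := fun x y =>
  if y = 0 then
    if x % 2 = 0 then PColor.X ⟨x / 2 % 8, Nat.mod_lt _ (by norm_num)⟩ else PColor.orC
  else
    if x % 2 = 0 then PColor.orC else PColor.Y ⟨x / 2 % 8, Nat.mod_lt _ (by norm_num)⟩

/-- The `4 × 4` subpatterns `q₁, …, q₄` (index `idx = 0, …, 3`), with west input
`w = idx / 2` and south input `s = idx % 2` feeding an `OR`-colored position. -/
def qPat (idx : Fin 4) : ℕ → ℕ → PColor := fun x y =>
  let wv : Fin 2 := ⟨idx.val / 2, by have := idx.isLt; omega⟩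
  let sv : Fin 2 := ⟨idx.val % 2, Nat.mod_lt _ (by norm_num)⟩
  match x, y with
  | 0, 0 => PColor.Z1
  | 1, 0 => PColor.Z2
  | 2, 0 => PColor.upD sv
  | 3, 0 => PColor.bD
  | 0, 1 => PColor.Z3
  | 1, 1 => PColor.aC
  | 2, 1 => PColor.upW sv
  | 3, 1 => PColor.bW
  | 0, 2 => PColor.arrD wv
  | 1, 2 => PColor.arrW wv
  | 2, 2 => PColor.orC
  | 3, 2 => if idx.val = 0 then PColor.minus else PColor.plus
  | 0, 3 => PColor.cD
  | 1, 3 => PColor.cW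
  | 2, 3 => PColor.gate idx
  | _, _ => PColor.dC

/-- The `6 × 3` subpattern `q₅`: bottom row `a ↑₀ ↑₁ ↑₀ ↑₁ b`, middle row
`→₀ OR OR OR OR +`, top row `c A B C D d`. -/
def q5Pat : ℕ → ℕ → PColor := fun x y =>
  match y, x with
  | 0, 0 => PColor.aC
  | 0, 1 => PColor.upW 0
  | 0, 2 => PColor.upW 1
  | 0, 3 => PColor.upW 0
  | 0, 4 => PColor.upW 1
  | 0, _ => PColor.bW
  | 1, 0 => PColor.arrW 0
  | 1, 5 => PColor.plus
  | 1, _ => PColor.orC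
  | 2, 0 => PColor.cW
  | 2, 1 => PColor.gate 0
  | 2, 2 => PColor.gate 1
  | 2, 3 => PColor.gate 2
  | 2, 4 => PColor.gate 3
  | _, _ => PColor.dC

/-- A literal: a variable index together with its sign (`true` = positive). -/
abbrev Lit := ℕ × Bool

/-- A clause with three literals. -/
abbrev Clause3 := Lit × Lit × Lit

/-- A boolean formula in 3-CNF over the variables `0, …, numVars - 1`. -/
structure CNF3 where
  numVars : ℕ
  clauses : List Clause3
  wf : ∀ cl ∈ clauses, cl.1.1 < numVars ∧ cl.2.1.1 < numVars ∧ cl.2.2.1 < numVars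

/-- Value of a literal under a variable assignment. -/
def litVal (f : ℕ → Bool) (l : Lit) : Bool := if l.2 then f l.1 else ! f l.1

/-- A 3-CNF formula is satisfiable if some assignment makes every clause true. -/
def CNF3.Satisfiable (F : CNF3) : Prop :=
  ∃ f : ℕ → Bool, ∀ cl ∈ F.clauses,
    (litVal f cl.1 || litVal f cl.2.1 || litVal f cl.2.2) = true

/-- The `2 × 2` subpattern `r₁(v)`. -/
def r1Pat (v : ℕ) : ℕ → ℕ → PColor := fun x y =>
  match x, y with
  | 0, 0 => PColor.Z4
  | 1, 0 => PColor.varW v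
  | 0, 1 => PColor.varAux v
  | _, _ => PColor.varMod v

/-- The `2 × 2` subpattern `r₂(v)`. -/
def r2Pat (v : ℕ) : ℕ → ℕ → PColor := fun x y =>
  match x, y with
  | 0, 0 => PColor.Z4
  | 1, 0 => PColor.negW v
  | 0, 1 => PColor.varAux v
  | _, _ => PColor.varModd v

/-- The `4 × 2` subpattern `r₃(v)`: bottom row `a v ¬v b`, top row `→₀ OR OR +`. -/
def r3Pat (v : ℕ) : ℕ → ℕ → PColor := fun x y =>
  match y, x with
  | 0, 0 => PColor.aC
  | 0, 1 => PColor.varW v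
  | 0, 2 => PColor.negW v
  | 0, _ => PColor.bW
  | 1, 0 => PColor.arrW 0
  | 1, 3 => PColor.plus
  | _, _ => PColor.orC

/-- The color of a literal. -/
def litColor (l : Lit) : PColor := if l.2 then PColor.varW l.1 else PColor.negW l.1

/-- The `5 × 2` subpattern `s(C)` for a clause `C = (c₁ ∨ c₂ ∨ c₃)`:
bottom row `a c₁ c₂ c₃ b`, top row `→₀ OR OR OR +`. -/
def sPat (cl : Clause3) : ℕ → ℕ → PColor := fun x y =>
  match y, x with
  | 0, 0 => PColor.aC
  | 0, 1 => litColor cl.1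
  | 0, 2 => litColor cl.2.1
  | 0, 3 => litColor cl.2.2
  | 0, _ => PColor.bW
  | 1, 0 => PColor.arrW 0
  | 1, 4 => PColor.plus
  | _, _ => PColor.orC

/-- A rectangular block: width, height and contents. -/
abbrev PBlock := ℕ × ℕ × (ℕ → ℕ → PColor)

/-- The list of subpatterns of `P_F`: `p`, `q₁, …, q₅`, then `r₁(v), r₂(v), r₃(v)`
for every variable `v`, then `s(C)` for every clause `C`. -/
def blocksOf (F : CNF3) : List PBlock :=
  [(16, 2, pPat), (4, 4, qPat 0), (4, 4, qPat 1), (4, 4, qPat 2), (4, 4, qPat 3),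
    (6, 3, q5Pat)]
    ++ (List.range F.numVars).flatMap
        (fun v => [(2, 2, r1Pat v), (2, 2, r2Pat v), (4, 2, r3Pat v)])
    ++ F.clauses.map (fun cl => (5, 2, sPat cl))

/-- Place the blocks side by side (starting at column `x0`, occupying rows `1, …, h`),
with one column of unique colors before each block and after the last one; all the
remaining positions carry unique colors (`uniq` of the position code). -/
def place : List PBlock → ℕ → ℕ → ℕ → PColor
  | [], _, x, y => PColor.uniq (Nat.pair x y)
  | b :: bs, x0, x, y =>
      if x0 ≤ x ∧ x < x0 + b.1 ∧ 1 ≤ y ∧ y < 1 + b.2.1 then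
        b.2.2 (x - x0) (y - 1)
      else if x < x0 + b.1 + 1 then PColor.uniq (Nat.pair x y)
      else place bs (x0 + b.1 + 1) x y

/-- The pattern `P_F` of the paper, of height `6` and width `45 + 11·|V| + 6·ℓ`. -/
def patF (F : CNF3) : ℕ → ℕ → PColor := fun x y => place (blocksOf F) 1 x y

/-- The width of the pattern `P_F`. -/
def widthF (F : CNF3) : ℕ := 45 + 11 * F.numVars + 6 * F.clauses.length

/-- The three colors black, white, gray. -/
inductive BWG where
  | black | white | gray
deriving DecidableEq

/-- The number of tile types of a given color in a tile assembly system. -/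
def countColor {C G : Type} [DecidableEq C] (T : RTAS C G) (c : C) : ℕ :=
  (T.tiles.filter (fun t => t.color = c)).card

/-- The `ℓ × ℓ` supertile portraying the color `c ∈ [k]` (with `ℓ = 5k + 8`):
white bottom row and left column; gray top row and right column except for one
white position at index `c + 1` of each (the color counters); black interior. -/
def superPat (ℓ c : ℕ) : ℕ → ℕ → BWG := fun x y =>
  if y = 0 then BWG.white
  else if x = 0 then BWG.white
  else if y = ℓ - 1 then (if x = c + 1 then BWG.white else BWG.gray)
  else if x = ℓ - 1 then (if y = c + 1 then BWG.white else BWG.gray)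
  else BWG.black

/-- The black/white/gray pattern `Q` built from the `w × h` pattern `P` with colors
in `[k]`: each position `(x, y)` of `P` is replaced by the `ℓ × ℓ` supertile
portraying `P x y` (supertiles in the bottom row/left column of `P` are
incomplete, lacking their white bottom row/left column), and three gadget rows
and three gadget columns are appended at the top and at the right. -/
def QPat (k w h : ℕ) (P : ℕ → ℕ → ℕ) : ℕ → ℕ → BWG := fun X Y =>
  let ℓ := 5 * k + 8
  if X + 1 < ℓ * w ∧ Y + 1 < ℓ * h then
    superPat ℓ (P ((X + 1) / ℓ) ((Y + 1) / ℓ)) ((X + 1) % ℓ) ((Y + 1) % ℓ)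
  else if X + 1 < ℓ * w then
    -- the three gadget rows
    if Y = ℓ * h then (if X = k then BWG.white else BWG.gray)
    else (if (X + 1) % ℓ = ℓ - 1 then BWG.gray else BWG.black)
  else if Y + 1 < ℓ * h then
    -- the three gadget columns
    if X = ℓ * w then (if Y = k then BWG.white else BWG.gray)
    else (if (Y + 1) % ℓ = ℓ - 1 then BWG.gray else BWG.black)
  else
    -- the top-right 3 × 3 corner
    if X = ℓ * w ∨ Y = ℓ * h then BWG.gray else BWG.black

/-- Width of the pattern `Q`. -/
def QW (k w : ℕ) : ℕ := (5 * k + 8) * w + 2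

/-- Height of the pattern `Q`. -/
def QH (k h : ℕ) : ℕ := (5 * k + 8) * h + 2

/-- `(P, m) ∈ ℐ` (with `m = k + 3`): `P` is, up to an identification `ρ` of its
colors with `[k] = {1, …, k}`, the pattern `P_F` of a 3-CNF formula `F`. -/
def InI (k w h : ℕ) (P : ℕ → ℕ → ℕ) : Prop :=
  ∃ (F : CNF3) (ρ : PColor → ℕ),
    w = widthF F ∧ h = 6 ∧
    Set.BijOn ρ (↑(colorsOf (widthF F) 6 (patF F))) (Set.Icc 1 k) ∧
    ∀ x < w, ∀ y < h, P x y = ρ (patF F x y)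

/-- The tile assignment of the supertile at `(x, y)` of the supertile grid,
as a partial function on inner coordinates: inner position `(i, j)` corresponds
to the global position `(x·ℓ + i - 1, y·ℓ + j - 1)`; positions with `i = 0`
(resp. `j = 0`) exist only if `x ≥ 1` (resp. `y ≥ 1`). -/
def superOpt {G : Type} (ℓ : ℕ) (f : ℕ → ℕ → Tile BWG G) (x y : ℕ) :
    ℕ → ℕ → Option (Tile BWG G) := fun i j =>
  if i < ℓ ∧ j < ℓ ∧ (1 ≤ x ∨ 1 ≤ i) ∧ (1 ≤ y ∨ 1 ≤ j) then
    some (f (x * ℓ + i - 1) (y * ℓ + j - 1))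
  else none

/-- `s(N)`: the north output of a supertile, i.e. the north glue of its tile in
position `C₂` (inner position `(0, ℓ - 1)`); defined for `x ≥ 1`. -/
def stN {G : Type} (ℓ : ℕ) (f : ℕ → ℕ → Tile BWG G) (x y : ℕ) : G :=
  (f (x * ℓ - 1) (y * ℓ + ℓ - 2)).north

/-- `s(E)`: the east output of a supertile, i.e. the east glue of its tile in
position `C₁` (inner position `(ℓ - 1, 0)`); defined for `y ≥ 1`. -/
def stE {G : Type} (ℓ : ℕ) (f : ℕ → ℕ → Tile BWG G) (x y : ℕ) : G :=
  (f (x * ℓ + ℓ - 2) (y * ℓ - 1)).east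

/-- `s(S)`: the south input of a supertile, i.e. the south glue of its tile in
position `A` (inner position `(0, 0)`); defined for `x, y ≥ 1`. -/
def stS {G : Type} (ℓ : ℕ) (f : ℕ → ℕ → Tile BWG G) (x y : ℕ) : G :=
  (f (x * ℓ - 1) (y * ℓ - 1)).south

/-- `s(W)`: the west input of a supertile, i.e. the west glue of its tile in
position `A` (inner position `(0, 0)`); defined for `x, y ≥ 1`. -/
def stW {G : Type} (ℓ : ℕ) (f : ℕ → ℕ → Tile BWG G) (x y : ℕ) : G :=
  (f (x * ℓ - 1) (y * ℓ - 1)).west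

namespace BGaux

lemma nat_mul_bound {L m n i : ℕ} (hx : m < n) (hi : i < L) : m * L + i < L * n := by
  calc m * L + i < m * L + L := by omega
  _ = (m+1) * L := by ring
  _ ≤ n * L := Nat.mul_le_mul_right L hx
  _ = L * n := Nat.mul_comm n L

lemma nat_mod_mul_add {L m r : ℕ} (hr : r < L) : (m * L + r) % L = r := by
  rw [Nat.mul_comm, Nat.mul_add_mod]; exact Nat.mod_eq_of_lt hr

lemma nat_div_mul_add {L m r : ℕ} (hr : r < L) : (m * L + r) / L = m := by
  rw [Nat.mul_comm, Nat.mul_add_div (by omega)]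
  simp [Nat.div_eq_of_lt hr]

lemma nat_pos_of {L x i : ℕ} (hL : 1 ≤ L) (hxi : 1 ≤ x ∨ 1 ≤ i) : 1 ≤ x * L + i := by
  rcases hxi with h | h
  · have : 1 * L ≤ x * L := Nat.mul_le_mul_right L h
    omega
  · omega

structure Ctx (G : Type) [DecidableEq G] where
  k : ℕ
  w : ℕ
  h : ℕ
  P : ℕ → ℕ → ℕ
  T : RTAS BWG G
  f : ℕ → ℕ → Tile BWG G
  hk : 1 ≤ k
  hw : 2 ≤ w
  hh : 2 ≤ h
  hP1 : ∀ x, x < w → ∀ y, y < h → 1 ≤ P x y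
  hPk : ∀ x, x < w → ∀ y, y < h → P x y ≤ k
  hD : DirectedTAS T
  hb : countColor T BWG.black ≤ 1
  hg : countColor T BWG.gray ≤ 2 * k + 3
  hf : IsAssignment T (QW k w) (QH k h) f
  hcol : ∀ X, X < QW k w → ∀ Y, Y < QH k h → (f X Y).color = QPat k w h P X Y

namespace Ctx

variable {G : Type} [DecidableEq G] (c : Ctx G)

def L : ℕ := 5 * c.k + 8

lemma hL : 13 ≤ c.L := by have := c.hk; unfold L; omega

lemma hLk : c.L = 5 * c.k + 8 := rfl

lemma hQW : QW c.k c.w = c.L * c.w + 2 := rfl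

lemma hQH : QH c.k c.h = c.L * c.h + 2 := rfl

lemma h2Lw : 2 * c.L ≤ c.L * c.w := by
  calc 2 * c.L = c.L * 2 := Nat.mul_comm _ _
  _ ≤ c.L * c.w := Nat.mul_le_mul_left c.L c.hw

lemma h2Lh : 2 * c.L ≤ c.L * c.h := by
  calc 2 * c.L = c.L * 2 := Nat.mul_comm _ _
  _ ≤ c.L * c.h := Nat.mul_le_mul_left c.L c.hh

lemma mem (X Y : ℕ) (hX : X < c.L * c.w + 2) (hY : Y < c.L * c.h + 2) :
    c.f X Y ∈ c.T.tiles := c.hf.1 X hX Y hY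

lemma adjW (X Y : ℕ) (hX : X + 1 < c.L * c.w + 2) (hY : Y < c.L * c.h + 2) :
    (c.f (X+1) Y).west = (c.f X Y).east := c.hf.2.2.2.1 X hX Y hY

lemma adjS (X Y : ℕ) (hX : X < c.L * c.w + 2) (hY : Y + 1 < c.L * c.h + 2) :
    (c.f X (Y+1)).south = (c.f X Y).north := c.hf.2.2.2.2 X hX Y hY

lemma det {t₁ t₂ : Tile BWG G} (h₁ : t₁ ∈ c.T.tiles) (h₂ : t₂ ∈ c.T.tiles)
    (hs : t₁.south = t₂.south) (hw : t₁.west = t₂.west) : t₁ = t₂ := by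
  by_contra hne
  rcases c.hD t₁ h₁ t₂ h₂ hne with h | h <;> tauto

/-- color of positions inside the supertile grid -/
lemma col_super (x y i j : ℕ) (hx : x < c.w) (hy : y < c.h) (hi : i < c.L) (hj : j < c.L)
    (hxi : 1 ≤ x ∨ 1 ≤ i) (hyj : 1 ≤ y ∨ 1 ≤ j) :
    (c.f (x * c.L + i - 1) (y * c.L + j - 1)).color = superPat c.L (c.P x y) i j := by
  have e : c.L = 5 * c.k + 8 := rfl
  have h13 := c.hL
  have hXb : x * c.L + i < c.L * c.w := nat_mul_bound hx hi
  have hYb : y * c.L + j < c.L * c.h := nat_mul_bound hy hj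
  have hx1 : 1 ≤ x * c.L + i := nat_pos_of (by omega) hxi
  have hy1 : 1 ≤ y * c.L + j := nat_pos_of (by omega) hyj
  have hXW : x * c.L + i - 1 < QW c.k c.w := by rw [c.hQW]; omega
  have hYH : y * c.L + j - 1 < QH c.k c.h := by rw [c.hQH]; omega
  rw [c.hcol _ hXW _ hYH]
  simp only [QPat]
  rw [← e]
  rw [show x * c.L + i - 1 + 1 = x * c.L + i from by omega,
      show y * c.L + j - 1 + 1 = y * c.L + j from by omega]
  rw [if_pos ⟨hXb, hYb⟩, nat_div_mul_add hi, nat_div_mul_add hj,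
      nat_mod_mul_add hi, nat_mod_mul_add hj]

/-- colors in the middle gadget row -/
lemma col_midrow (X : ℕ) (hX : X + 1 < c.L * c.w) :
    (c.f X (c.L * c.h)).color = if X = c.k then BWG.white else BWG.gray := by
  have e : c.L = 5 * c.k + 8 := rfl
  have h13 := c.hL
  have h2 := c.h2Lh
  have hXW : X < QW c.k c.w := by rw [c.hQW]; omega
  have hYH : c.L * c.h < QH c.k c.h := by rw [c.hQH]; omega
  rw [c.hcol _ hXW _ hYH]
  simp only [QPat]
  rw [← e]
  rw [if_neg (by omega), if_pos hX, if_pos rfl]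

/-- colors in the lower outer gadget row -/
lemma col_row1 (X : ℕ) (hX : X + 1 < c.L * c.w) :
    (c.f X (c.L * c.h - 1)).color
      = if (X + 1) % c.L = c.L - 1 then BWG.gray else BWG.black := by
  have e : c.L = 5 * c.k + 8 := rfl
  have h13 := c.hL
  have h2 := c.h2Lh
  have hXW : X < QW c.k c.w := by rw [c.hQW]; omega
  have hYH : c.L * c.h - 1 < QH c.k c.h := by rw [c.hQH]; omega
  rw [c.hcol _ hXW _ hYH]
  simp only [QPat]
  rw [← e]
  rw [show c.L * c.h - 1 + 1 = c.L * c.h from by omega]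
  rw [if_neg (by omega), if_pos hX, if_neg (by omega)]

/-- colors in the upper outer gadget row -/
lemma col_row3 (X : ℕ) (hX : X + 1 < c.L * c.w) :
    (c.f X (c.L * c.h + 1)).color
      = if (X + 1) % c.L = c.L - 1 then BWG.gray else BWG.black := by
  have e : c.L = 5 * c.k + 8 := rfl
  have h13 := c.hL
  have h2 := c.h2Lh
  have hXW : X < QW c.k c.w := by rw [c.hQW]; omega
  have hYH : c.L * c.h + 1 < QH c.k c.h := by rw [c.hQH]; omega
  rw [c.hcol _ hXW _ hYH]
  simp only [QPat]
  rw [← e]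
  rw [if_neg (by omega), if_pos hX, if_neg (by omega)]

/-- colors in the middle gadget column -/
lemma col_midcol (Y : ℕ) (hY : Y + 1 < c.L * c.h) :
    (c.f (c.L * c.w) Y).color = if Y = c.k then BWG.white else BWG.gray := by
  have e : c.L = 5 * c.k + 8 := rfl
  have h13 := c.hL
  have h2 := c.h2Lw
  have hXW : c.L * c.w < QW c.k c.w := by rw [c.hQW]; omega
  have hYH : Y < QH c.k c.h := by rw [c.hQH]; omega
  rw [c.hcol _ hXW _ hYH]
  simp only [QPat]
  rw [← e]
  rw [if_neg (by omega), if_neg (by omega), if_pos hY, if_pos rfl]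

/-- colors in the left outer gadget column -/
lemma col_col1 (Y : ℕ) (hY : Y + 1 < c.L * c.h) :
    (c.f (c.L * c.w - 1) Y).color
      = if (Y + 1) % c.L = c.L - 1 then BWG.gray else BWG.black := by
  have e : c.L = 5 * c.k + 8 := rfl
  have h13 := c.hL
  have h2 := c.h2Lw
  have hXW : c.L * c.w - 1 < QW c.k c.w := by rw [c.hQW]; omega
  have hYH : Y < QH c.k c.h := by rw [c.hQH]; omega
  rw [c.hcol _ hXW _ hYH]
  simp only [QPat]
  rw [← e]
  rw [show c.L * c.w - 1 + 1 = c.L * c.w from by omega]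
  rw [if_neg (by omega), if_neg (by omega), if_pos hY, if_neg (by omega)]

/-- colors in the right outer gadget column -/
lemma col_col3 (Y : ℕ) (hY : Y + 1 < c.L * c.h) :
    (c.f (c.L * c.w + 1) Y).color
      = if (Y + 1) % c.L = c.L - 1 then BWG.gray else BWG.black := by
  have e : c.L = 5 * c.k + 8 := rfl
  have h13 := c.hL
  have h2 := c.h2Lw
  have hXW : c.L * c.w + 1 < QW c.k c.w := by rw [c.hQW]; omega
  have hYH : Y < QH c.k c.h := by rw [c.hQH]; omega
  rw [c.hcol _ hXW _ hYH]
  simp only [QPat]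
  rw [← e]
  rw [if_neg (by omega), if_neg (by omega), if_pos hY, if_neg (by omega)]

end Ctx
end BGaux
namespace BGaux

lemma superPat_black {L cc i j : ℕ} (h13 : 13 ≤ L) (hi : 1 ≤ i) (hi2 : i ≤ L-2)
    (hj : 1 ≤ j) (hj2 : j ≤ L-2) : superPat L cc i j = BWG.black := by
  unfold superPat
  rw [if_neg (by omega), if_neg (by omega), if_neg (by omega), if_neg (by omega)]

lemma superPat_toprow {L cc i : ℕ} (h13 : 13 ≤ L) (hi : 1 ≤ i) :
    superPat L cc i (L-1) = if i = cc + 1 then BWG.white else BWG.gray := by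
  unfold superPat
  rw [if_neg (by omega), if_neg (by omega), if_pos rfl]

lemma superPat_rightcol {L cc j : ℕ} (h13 : 13 ≤ L) (hj : 1 ≤ j) (hj2 : j ≤ L-2) :
    superPat L cc (L-1) j = if j = cc + 1 then BWG.white else BWG.gray := by
  unfold superPat
  rw [if_neg (by omega), if_neg (by omega), if_neg (by omega), if_pos rfl]

namespace Ctx

variable {G : Type} [DecidableEq G] (c : Ctx G)

def b0 : Tile BWG G := c.f c.L c.L
def bulH : G := c.b0.west
def bulV : G := c.b0.south
def blackT : Tile BWG G := ⟨BWG.black, c.bulV, c.bulH, c.bulV, c.bulH⟩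

lemma black_unique {t₁ t₂ : Tile BWG G} (h₁ : t₁ ∈ c.T.tiles) (hc₁ : t₁.color = BWG.black)
    (h₂ : t₂ ∈ c.T.tiles) (hc₂ : t₂.color = BWG.black) : t₁ = t₂ := by
  have hb := c.hb
  unfold countColor at hb
  exact Finset.card_le_one.mp hb t₁ (Finset.mem_filter.mpr ⟨h₁, hc₁⟩)
    t₂ (Finset.mem_filter.mpr ⟨h₂, hc₂⟩)

lemma black_at (x y i j : ℕ) (hx : x < c.w) (hy : y < c.h) (hi : 1 ≤ i) (hi2 : i ≤ c.L-2)
    (hj : 1 ≤ j) (hj2 : j ≤ c.L-2) :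
    (c.f (x * c.L + i - 1) (y * c.L + j - 1)).color = BWG.black := by
  have h13 := c.hL
  rw [c.col_super x y i j hx hy (by omega) (by omega) (Or.inr hi) (Or.inr hj)]
  exact superPat_black h13 hi hi2 hj hj2

lemma b0_color : c.b0.color = BWG.black := by
  have h13 := c.hL
  have := c.black_at 1 1 1 1 (by have := c.hw; omega) (by have := c.hh; omega) (by omega) (by omega)
    (by omega) (by omega)
  rw [show 1 * c.L + 1 - 1 = c.L from by omega] at this
  exact this

lemma b0_mem : c.b0 ∈ c.T.tiles := by
  have h13 := c.hL
  have h2w := c.h2Lw; have h2h := c.h2Lh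
  exact c.mem _ _ (by omega) (by omega)

lemma b0_eq : c.b0 = c.blackT := by
  have h13 := c.hL
  have h2w := c.h2Lw; have h2h := c.h2Lh
  have hbr : (c.f (c.L + 1) c.L).color = BWG.black := by
    have := c.black_at 1 1 2 1 (by have := c.hw; omega) (by have := c.hh; omega) (by omega) (by omega)
      (by omega) (by omega)
    rw [show 1 * c.L + 2 - 1 = c.L + 1 from by omega,
        show 1 * c.L + 1 - 1 = c.L from by omega] at this
    exact this
  have hbu : (c.f c.L (c.L + 1)).color = BWG.black := by
    have := c.black_at 1 1 1 2 (by have := c.hw; omega) (by have := c.hh; omega) (by omega) (by omega)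
      (by omega) (by omega)
    rw [show 1 * c.L + 1 - 1 = c.L from by omega, show 1 * c.L + 2 - 1 = c.L + 1 from by omega]
      at this
    exact this
  have hr : c.f (c.L + 1) c.L = c.b0 :=
    c.black_unique (c.mem _ _ (by omega) (by omega)) hbr c.b0_mem c.b0_color
  have hu : c.f c.L (c.L + 1) = c.b0 :=
    c.black_unique (c.mem _ _ (by omega) (by omega)) hbu c.b0_mem c.b0_color
  have h1 : c.b0.west = c.b0.east := by
    have := c.adjW c.L c.L (by omega) (by omega); rw [hr] at this; exact this
  have h2 : c.b0.south = c.b0.north := by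
    have := c.adjS c.L c.L (by omega) (by omega); rw [hu] at this; exact this
  calc c.b0 = ⟨c.b0.color, c.b0.north, c.b0.east, c.b0.south, c.b0.west⟩ := rfl
  _ = c.blackT := by rw [c.b0_color, ← h1, ← h2]; rfl

lemma blackT_mem : c.blackT ∈ c.T.tiles := by rw [← c.b0_eq]; exact c.b0_mem

lemma black_eq (X Y : ℕ) (hX : X < c.L * c.w + 2) (hY : Y < c.L * c.h + 2)
    (hblack : (c.f X Y).color = BWG.black) : c.f X Y = c.blackT := by
  rw [← c.b0_eq]
  exact c.black_unique (c.mem X Y hX hY) hblack c.b0_mem c.b0_color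

lemma south_bulV (X Y : ℕ) (hX : X < c.L * c.w + 2) (hY : Y + 1 < c.L * c.h + 2)
    (hblack : (c.f X Y).color = BWG.black) : (c.f X (Y+1)).south = c.bulV := by
  rw [c.adjS X Y hX hY, c.black_eq X Y hX (by omega) hblack]; rfl

lemma west_bulH (X Y : ℕ) (hX : X + 1 < c.L * c.w + 2) (hY : Y < c.L * c.h + 2)
    (hblack : (c.f X Y).color = BWG.black) : (c.f (X+1) Y).west = c.bulH := by
  rw [c.adjW X Y hX hY, c.black_eq X Y (by omega) hY hblack]; rfl

lemma east_bulH (X Y : ℕ) (hX : X + 1 < c.L * c.w + 2) (hY : Y < c.L * c.h + 2)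
    (hblack : (c.f (X+1) Y).color = BWG.black) : (c.f X Y).east = c.bulH := by
  have := c.adjW X Y hX hY
  rw [c.black_eq (X+1) Y hX hY hblack] at this
  exact this.symm

lemma north_bulV (X Y : ℕ) (hX : X < c.L * c.w + 2) (hY : Y + 1 < c.L * c.h + 2)
    (hblack : (c.f X (Y+1)).color = BWG.black) : (c.f X Y).north = c.bulV := by
  have := c.adjS X Y hX hY
  rw [c.black_eq X (Y+1) hX hY hblack] at this
  exact this.symm

def GrayF : Finset (Tile BWG G) := c.T.tiles.filter (fun t => t.color = BWG.gray)
def Aset : Finset (Tile BWG G) := c.GrayF.filter (fun t => t.south = c.bulV)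
def Bset : Finset (Tile BWG G) := c.GrayF.filter (fun t => t.west = c.bulH)

lemma grayF_card : c.GrayF.card ≤ 2 * c.k + 3 := c.hg

lemma black_of_bulbul {t : Tile BWG G} (ht : t ∈ c.T.tiles) (hs : t.south = c.bulV)
    (hw : t.west = c.bulH) : t = c.blackT :=
  c.det ht c.blackT_mem hs hw

lemma mem_Aset {t : Tile BWG G} : t ∈ c.Aset ↔
    t ∈ c.T.tiles ∧ t.color = BWG.gray ∧ t.south = c.bulV := by
  unfold Aset GrayF; simp [Finset.mem_filter, and_assoc]

lemma mem_Bset {t : Tile BWG G} : t ∈ c.Bset ↔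
    t ∈ c.T.tiles ∧ t.color = BWG.gray ∧ t.west = c.bulH := by
  unfold Bset GrayF; simp [Finset.mem_filter, and_assoc]

lemma mem_GrayF {t : Tile BWG G} : t ∈ c.GrayF ↔ t ∈ c.T.tiles ∧ t.color = BWG.gray := by
  unfold GrayF; simp [Finset.mem_filter]

lemma disjAB : Disjoint c.Aset c.Bset := by
  rw [Finset.disjoint_left]
  intro t ht ht'
  rw [c.mem_Aset] at ht; rw [c.mem_Bset] at ht'
  have := c.black_of_bulbul ht.1 ht.2.2 ht'.2.2
  rw [this] at ht
  simp [blackT] at ht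

lemma chainH (Y lo hi : ℕ) (hY : Y < c.L * c.h + 2) (hhi : hi < c.L * c.w + 2)
    (hs : ∀ X, lo ≤ X → X ≤ hi → (c.f X Y).south = c.bulV)
    (a b : ℕ) (ha : lo ≤ a) (hab : a ≤ b) (heq : c.f a Y = c.f b Y) :
    ∀ t, b + t ≤ hi → c.f (a+t) Y = c.f (b+t) Y := by
  intro t
  induction t with
  | zero => intro _; simpa using heq
  | succ n ih =>
    intro hn
    have ihn := ih (by omega)
    have hwest : (c.f (a+n+1) Y).west = (c.f (b+n+1) Y).west := by
      rw [c.adjW (a+n) Y (by omega) hY, c.adjW (b+n) Y (by omega) hY, ihn]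
    show c.f (a+n+1) Y = c.f (b+n+1) Y
    refine c.det (c.mem _ _ (by omega) hY) (c.mem _ _ (by omega) hY) ?_ hwest
    rw [hs (a+n+1) (by omega) (by omega), hs (b+n+1) (by omega) (by omega)]

lemma chainV (X lo hi : ℕ) (hX : X < c.L * c.w + 2) (hhi : hi < c.L * c.h + 2)
    (hwst : ∀ Y, lo ≤ Y → Y ≤ hi → (c.f X Y).west = c.bulH)
    (a b : ℕ) (ha : lo ≤ a) (hab : a ≤ b) (heq : c.f X a = c.f X b) :
    ∀ t, b + t ≤ hi → c.f X (a+t) = c.f X (b+t) := by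
  intro t
  induction t with
  | zero => intro _; simpa using heq
  | succ n ih =>
    intro hn
    have ihn := ih (by omega)
    have hsouth : (c.f X (a+n+1)).south = (c.f X (b+n+1)).south := by
      rw [c.adjS X (a+n) hX (by omega), c.adjS X (b+n) hX (by omega), ihn]
    show c.f X (a+n+1) = c.f X (b+n+1)
    refine c.det (c.mem _ _ hX (by omega)) (c.mem _ _ hX (by omega)) hsouth ?_
    rw [hwst (a+n+1) (by omega) (by omega), hwst (b+n+1) (by omega) (by omega)]

end Ctx
end BGaux
namespace BGaux
namespace Ctx

variable {G : Type} [DecidableEq G] (c : Ctx G)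

def M (X : ℕ) : Tile BWG G := c.f X (c.L * c.h)
def N (Y : ℕ) : Tile BWG G := c.f (c.L * c.w) Y
def cH (i : ℕ) : G := (c.M (c.k - i)).west
def diaH : G := (c.M c.k).east
def cV (i : ℕ) : G := (c.N (c.k - i)).south
def diaV : G := (c.N c.k).north

lemma hkL : c.k + 2 ≤ c.L - 3 := by have := c.hLk; have := c.hk; omega

lemma M_mem (X : ℕ) (hX : X ≤ c.L - 1) : c.M X ∈ c.T.tiles := by
  have h13 := c.hL; have h2w := c.h2Lw; have h2h := c.h2Lh
  exact c.mem _ _ (by omega) (by omega)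

lemma M_color (X : ℕ) (hX : X ≤ c.L - 1) :
    (c.M X).color = if X = c.k then BWG.white else BWG.gray := by
  have h13 := c.hL; have h2w := c.h2Lw
  exact c.col_midrow X (by omega)

lemma M_south_gen (X : ℕ) (hX : X + 1 < c.L * c.w) (hm : (X+1) % c.L ≠ c.L - 1) :
    (c.M X).south = c.bulV := by
  have h13 := c.hL; have h2h := c.h2Lh
  have hb : (c.f X (c.L * c.h - 1)).color = BWG.black := by
    rw [c.col_row1 X hX, if_neg hm]
  have := c.south_bulV X (c.L * c.h - 1) (by omega) (by omega) hb
  rw [show c.L * c.h - 1 + 1 = c.L * c.h from by omega] at this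
  exact this

lemma M_north_gen (X : ℕ) (hX : X + 1 < c.L * c.w) (hm : (X+1) % c.L ≠ c.L - 1) :
    (c.M X).north = c.bulV := by
  have h13 := c.hL; have h2h := c.h2Lh
  have hb : (c.f X (c.L * c.h + 1)).color = BWG.black := by
    rw [c.col_row3 X hX, if_neg hm]
  exact c.north_bulV X (c.L * c.h) (by omega) (by omega) hb

lemma M_south (X : ℕ) (hX : X ≤ c.L - 3) : (c.M X).south = c.bulV := by
  have h13 := c.hL; have h2w := c.h2Lw
  refine c.M_south_gen X (by omega) ?_
  rw [Nat.mod_eq_of_lt (by omega : X + 1 < c.L)]; omega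

lemma M_north (X : ℕ) (hX : X ≤ c.L - 3) : (c.M X).north = c.bulV := by
  have h13 := c.hL; have h2w := c.h2Lw
  refine c.M_north_gen X (by omega) ?_
  rw [Nat.mod_eq_of_lt (by omega : X + 1 < c.L)]; omega

lemma M_memA (X : ℕ) (hX : X ≤ c.L - 3) (hne : X ≠ c.k) : c.M X ∈ c.Aset := by
  have h13 := c.hL
  rw [c.mem_Aset]
  refine ⟨c.M_mem X (by omega), ?_, c.M_south X hX⟩
  rw [c.M_color X (by omega), if_neg hne]

lemma M_chain (a b : ℕ) (hab : a ≤ b) (heq : c.M a = c.M b) :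
    ∀ t, b + t ≤ c.L - 3 → c.M (a+t) = c.M (b+t) := by
  have h13 := c.hL; have h2w := c.h2Lw; have h2h := c.h2Lh
  exact c.chainH (c.L * c.h) 0 (c.L - 3) (by omega) (by omega)
    (fun X _ hX2 => c.M_south X hX2) a b (by omega) hab heq

lemma M_ne (a b : ℕ) (ha : a ≤ c.k) (hab : a < b) (hb : b ≤ c.k + 2) : c.M a ≠ c.M b := by
  have h13 := c.hL; have hLk := c.hLk
  intro heq
  have hchain := c.M_chain a b hab.le heq (c.k - a) (by omega)
  rw [show a + (c.k - a) = c.k from by omega] at hchain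
  have h1 : (c.M c.k).color = BWG.white := by rw [c.M_color c.k (by omega), if_pos rfl]
  have h2 : (c.M (b + (c.k - a))).color = BWG.gray := by
    rw [c.M_color _ (by omega), if_neg (by omega)]
  rw [hchain] at h1; rw [h1] at h2; exact absurd h2 (by simp)

lemma M_west_succ (X : ℕ) (hX : X + 1 ≤ c.L - 1) : (c.M (X+1)).west = (c.M X).east := by
  have h13 := c.hL; have h2w := c.h2Lw; have h2h := c.h2Lh
  exact c.adjW X (c.L * c.h) (by omega) (by omega)

lemma M_west (X : ℕ) (hX : X ≤ c.k) : (c.M X).west = c.cH (c.k - X) := by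
  unfold cH; rw [show c.k - (c.k - X) = X from by omega]

lemma M_east (X : ℕ) (hX : X < c.k) : (c.M X).east = c.cH (c.k - X - 1) := by
  have h13 := c.hL; have hLk := c.hLk
  rw [← c.M_west_succ X (by omega), c.M_west (X+1) (by omega),
    show c.k - (X+1) = c.k - X - 1 from by omega]

lemma Mk1_west : (c.M (c.k+1)).west = c.diaH := by
  have h13 := c.hL; have hLk := c.hLk
  exact c.M_west_succ c.k (by omega)

lemma cH_ne_bulH (i : ℕ) (hi : i ≤ c.k) : c.cH i ≠ c.bulH := by
  have h13 := c.hL; have hLk := c.hLk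
  intro heq
  have hbb := c.black_of_bulbul (c.M_mem (c.k - i) (by omega))
    (c.M_south (c.k - i) (by omega)) ((c.M_west (c.k - i) (by omega)).trans
      (by rw [show c.k - (c.k - i) = i from by omega]; exact heq))
  have hcol := c.M_color (c.k - i) (by omega)
  rw [hbb] at hcol
  by_cases hik : c.k - i = c.k <;> simp [blackT, hik] at hcol

lemma cH_inj (i j : ℕ) (hi : i ≤ c.k) (hj : j ≤ c.k) (heq : c.cH i = c.cH j) : i = j := by
  have h13 := c.hL; have hLk := c.hLk
  by_contra hne
  rcases Nat.lt_or_ge i j with hlt | hge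
  · have := c.det (c.M_mem (c.k - i) (by omega)) (c.M_mem (c.k - j) (by omega))
      (by rw [c.M_south _ (by omega), c.M_south _ (by omega)])
      (by rw [c.M_west _ (by omega), c.M_west _ (by omega),
        show c.k - (c.k - i) = i from by omega, show c.k - (c.k - j) = j from by omega]
          ; exact heq)
    exact c.M_ne (c.k - j) (c.k - i) (by omega) (by omega) (by omega) this.symm
  · have hlt : j < i := by omega
    have := c.det (c.M_mem (c.k - i) (by omega)) (c.M_mem (c.k - j) (by omega))
      (by rw [c.M_south _ (by omega), c.M_south _ (by omega)])
      (by rw [c.M_west _ (by omega), c.M_west _ (by omega),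
        show c.k - (c.k - i) = i from by omega, show c.k - (c.k - j) = j from by omega]
          ; exact heq)
    exact c.M_ne (c.k - i) (c.k - j) (by omega) (by omega) (by omega) this

lemma diaH_ne_bulH : c.diaH ≠ c.bulH := by
  have h13 := c.hL; have hLk := c.hLk
  intro heq
  have hbb := c.black_of_bulbul (c.M_mem (c.k+1) (by omega))
    (c.M_south (c.k+1) (by omega)) (c.Mk1_west.trans heq)
  have hcol := c.M_color (c.k+1) (by omega)
  rw [hbb] at hcol
  simp [blackT, show c.k + 1 ≠ c.k from by omega] at hcol

lemma diaH_ne_cH (i : ℕ) (hi : i ≤ c.k) : c.diaH ≠ c.cH i := by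
  have h13 := c.hL; have hLk := c.hLk
  intro heq
  have := c.det (c.M_mem (c.k+1) (by omega)) (c.M_mem (c.k - i) (by omega))
    (by rw [c.M_south _ (by omega), c.M_south _ (by omega)])
    (by rw [c.Mk1_west, c.M_west _ (by omega),
      show c.k - (c.k - i) = i from by omega]; exact heq)
  exact c.M_ne (c.k - i) (c.k + 1) (by omega) (by omega) (by omega) this.symm

end Ctx
end BGaux
namespace BGaux
namespace Ctx

variable {G : Type} [DecidableEq G] (c : Ctx G)

lemma N_mem (Y : ℕ) (hY : Y ≤ 2 * c.L - 2) : c.N Y ∈ c.T.tiles := by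
  have h13 := c.hL; have h2w := c.h2Lw; have h2h := c.h2Lh
  exact c.mem _ _ (by omega) (by omega)

lemma N_color (Y : ℕ) (hY : Y ≤ 2 * c.L - 2) :
    (c.N Y).color = if Y = c.k then BWG.white else BWG.gray := by
  have h13 := c.hL; have h2h := c.h2Lh
  exact c.col_midcol Y (by omega)

lemma N_west_gen (Y : ℕ) (hY : Y + 1 < c.L * c.h) (hm : (Y+1) % c.L ≠ c.L - 1) :
    (c.N Y).west = c.bulH := by
  have h13 := c.hL; have h2w := c.h2Lw
  have hb : (c.f (c.L * c.w - 1) Y).color = BWG.black := by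
    rw [c.col_col1 Y hY, if_neg hm]
  have := c.west_bulH (c.L * c.w - 1) Y (by omega) (by omega) hb
  rw [show c.L * c.w - 1 + 1 = c.L * c.w from by omega] at this
  exact this

lemma N_east_gen (Y : ℕ) (hY : Y + 1 < c.L * c.h) (hm : (Y+1) % c.L ≠ c.L - 1) :
    (c.N Y).east = c.bulH := by
  have h13 := c.hL; have h2w := c.h2Lw
  have hb : (c.f (c.L * c.w + 1) Y).color = BWG.black := by
    rw [c.col_col3 Y hY, if_neg hm]
  exact c.east_bulH (c.L * c.w) Y (by omega) (by omega) hb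

lemma N_west (Y : ℕ) (hY : Y ≤ c.L - 3) : (c.N Y).west = c.bulH := by
  have h13 := c.hL; have h2h := c.h2Lh
  refine c.N_west_gen Y (by omega) ?_
  rw [Nat.mod_eq_of_lt (by omega : Y + 1 < c.L)]; omega

lemma N_east (Y : ℕ) (hY : Y ≤ c.L - 3) : (c.N Y).east = c.bulH := by
  have h13 := c.hL; have h2h := c.h2Lh
  refine c.N_east_gen Y (by omega) ?_
  rw [Nat.mod_eq_of_lt (by omega : Y + 1 < c.L)]; omega

lemma N_memB (Y : ℕ) (hY : Y ≤ c.L - 3) (hne : Y ≠ c.k) : c.N Y ∈ c.Bset := by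
  have h13 := c.hL
  rw [c.mem_Bset]
  refine ⟨c.N_mem Y (by omega), ?_, c.N_west Y hY⟩
  rw [c.N_color Y (by omega), if_neg hne]

lemma N_chain (a b : ℕ) (hab : a ≤ b) (heq : c.N a = c.N b) :
    ∀ t, b + t ≤ c.L - 3 → c.N (a+t) = c.N (b+t) := by
  have h13 := c.hL; have h2w := c.h2Lw; have h2h := c.h2Lh
  exact c.chainV (c.L * c.w) 0 (c.L - 3) (by omega) (by omega)
    (fun Y _ hY2 => c.N_west Y hY2) a b (by omega) hab heq

lemma N_ne (a b : ℕ) (ha : a ≤ c.k) (hab : a < b) (hb : b ≤ c.k + 2) : c.N a ≠ c.N b := by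
  have hLk := c.hLk
  intro heq
  have hchain := c.N_chain a b hab.le heq (c.k - a) (by omega)
  rw [show a + (c.k - a) = c.k from by omega] at hchain
  have h1 : (c.N c.k).color = BWG.white := by rw [c.N_color c.k (by omega), if_pos rfl]
  have h2 : (c.N (b + (c.k - a))).color = BWG.gray := by
    rw [c.N_color _ (by omega), if_neg (by omega)]
  rw [hchain] at h1; rw [h1] at h2; exact absurd h2 (by simp)

lemma N_south_succ (Y : ℕ) (hY : Y + 1 ≤ 2 * c.L - 2) : (c.N (Y+1)).south = (c.N Y).north := by
  have h13 := c.hL; have h2w := c.h2Lw; have h2h := c.h2Lh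
  exact c.adjS (c.L * c.w) Y (by omega) (by omega)

lemma N_south (Y : ℕ) (hY : Y ≤ c.k) : (c.N Y).south = c.cV (c.k - Y) := by
  unfold cV; rw [show c.k - (c.k - Y) = Y from by omega]

lemma N_north (Y : ℕ) (hY : Y < c.k) : (c.N Y).north = c.cV (c.k - Y - 1) := by
  have hLk := c.hLk
  rw [← c.N_south_succ Y (by omega), c.N_south (Y+1) (by omega),
    show c.k - (Y+1) = c.k - Y - 1 from by omega]

lemma Nk1_south : (c.N (c.k+1)).south = c.diaV := by
  have hLk := c.hLk
  exact c.N_south_succ c.k (by omega)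

lemma cV_ne_bulV (i : ℕ) (hi : i ≤ c.k) : c.cV i ≠ c.bulV := by
  have hLk := c.hLk
  intro heq
  have hbb := c.black_of_bulbul (c.N_mem (c.k - i) (by omega))
    ((c.N_south (c.k - i) (by omega)).trans
      (by rw [show c.k - (c.k - i) = i from by omega]; exact heq))
    (c.N_west (c.k - i) (by omega))
  have hcol := c.N_color (c.k - i) (by omega)
  rw [hbb] at hcol
  by_cases hik : c.k - i = c.k <;> simp [blackT, hik] at hcol

lemma cV_inj (i j : ℕ) (hi : i ≤ c.k) (hj : j ≤ c.k) (heq : c.cV i = c.cV j) : i = j := by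
  have hLk := c.hLk
  by_contra hne
  rcases Nat.lt_or_ge i j with hlt | hge
  · have := c.det (c.N_mem (c.k - i) (by omega)) (c.N_mem (c.k - j) (by omega))
      (by rw [c.N_south _ (by omega), c.N_south _ (by omega),
        show c.k - (c.k - i) = i from by omega, show c.k - (c.k - j) = j from by omega]
          ; exact heq)
      (by rw [c.N_west _ (by omega), c.N_west _ (by omega)])
    exact c.N_ne (c.k - j) (c.k - i) (by omega) (by omega) (by omega) this.symm
  · have hlt : j < i := by omega
    have := c.det (c.N_mem (c.k - i) (by omega)) (c.N_mem (c.k - j) (by omega))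
      (by rw [c.N_south _ (by omega), c.N_south _ (by omega),
        show c.k - (c.k - i) = i from by omega, show c.k - (c.k - j) = j from by omega]
          ; exact heq)
      (by rw [c.N_west _ (by omega), c.N_west _ (by omega)])
    exact c.N_ne (c.k - i) (c.k - j) (by omega) (by omega) (by omega) this

lemma diaV_ne_bulV : c.diaV ≠ c.bulV := by
  have hLk := c.hLk
  intro heq
  have hbb := c.black_of_bulbul (c.N_mem (c.k+1) (by omega))
    (c.Nk1_south.trans heq) (c.N_west (c.k+1) (by omega))
  have hcol := c.N_color (c.k+1) (by omega)
  rw [hbb] at hcol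
  simp [blackT, show c.k + 1 ≠ c.k from by omega] at hcol

lemma diaV_ne_cV (i : ℕ) (hi : i ≤ c.k) : c.diaV ≠ c.cV i := by
  have hLk := c.hLk
  intro heq
  have := c.det (c.N_mem (c.k+1) (by omega)) (c.N_mem (c.k - i) (by omega))
    (by rw [c.Nk1_south, c.N_south _ (by omega),
      show c.k - (c.k - i) = i from by omega]; exact heq)
    (by rw [c.N_west _ (by omega), c.N_west _ (by omega)])
  exact c.N_ne (c.k - i) (c.k + 1) (by omega) (by omega) (by omega) this.symm

end Ctx
end BGaux
namespace BGaux
namespace Ctx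

variable {G : Type} [DecidableEq G] (c : Ctx G)

def Chor (i : ℕ) : Tile BWG G := ⟨BWG.gray, c.bulV, c.cH i, c.bulV, c.cH (i+1)⟩
def Cver (i : ℕ) : Tile BWG G := ⟨BWG.gray, c.cV i, c.bulH, c.cV (i+1), c.bulH⟩
def F1t : Tile BWG G := ⟨BWG.gray, c.diaV, c.bulH, c.diaV, c.bulH⟩
def F2t : Tile BWG G := ⟨BWG.gray, c.bulV, c.diaH, c.bulV, c.diaH⟩
def Gt : Tile BWG G := ⟨BWG.gray, c.diaV, c.diaH, c.diaV, c.diaH⟩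
def D1t : Tile BWG G := ⟨BWG.white, c.diaV, c.bulH, c.cV 0, c.bulH⟩
def D2t : Tile BWG G := ⟨BWG.white, c.bulV, c.diaH, c.bulV, c.cH 0⟩

lemma M_eq_Chor (X : ℕ) (hX : X < c.k) : c.M X = c.Chor (c.k - X - 1) := by
  have hLk := c.hLk
  calc c.M X = ⟨(c.M X).color, (c.M X).north, (c.M X).east, (c.M X).south, (c.M X).west⟩ := rfl
  _ = _ := by
    rw [c.M_color X (by omega), if_neg (by omega), c.M_north X (by omega),
      c.M_east X hX, c.M_south X (by omega), c.M_west X (by omega)]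
    unfold Chor
    rw [show c.k - X - 1 + 1 = c.k - X from by omega]

lemma N_eq_Cver (Y : ℕ) (hY : Y < c.k) : c.N Y = c.Cver (c.k - Y - 1) := by
  have hLk := c.hLk
  calc c.N Y = ⟨(c.N Y).color, (c.N Y).north, (c.N Y).east, (c.N Y).south, (c.N Y).west⟩ := rfl
  _ = _ := by
    rw [c.N_color Y (by omega), if_neg (by omega), c.N_north Y hY,
      c.N_east Y (by omega), c.N_south Y (by omega), c.N_west Y (by omega)]
    unfold Cver
    rw [show c.k - Y - 1 + 1 = c.k - Y from by omega]

lemma Mk_eq_D2 : c.M c.k = c.D2t := by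
  have hLk := c.hLk
  calc c.M c.k
      = ⟨(c.M c.k).color, (c.M c.k).north, (c.M c.k).east, (c.M c.k).south, (c.M c.k).west⟩ :=
        rfl
  _ = _ := by
    rw [c.M_color c.k (by omega), if_pos rfl, c.M_north c.k (by omega),
      c.M_south c.k (by omega)]
    unfold D2t cH diaH
    rw [Nat.sub_zero]

lemma Nk_eq_D1 : c.N c.k = c.D1t := by
  have hLk := c.hLk
  calc c.N c.k
      = ⟨(c.N c.k).color, (c.N c.k).north, (c.N c.k).east, (c.N c.k).south, (c.N c.k).west⟩ :=
        rfl
  _ = _ := by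
    rw [c.N_color c.k (by omega), if_pos rfl, c.N_east c.k (by omega),
      c.N_west c.k (by omega)]
    unfold D1t cV diaV
    rw [Nat.sub_zero]

def AL : Finset (Tile BWG G) := insert (c.M (c.k+1)) ((Finset.range c.k).image c.M)
def BL : Finset (Tile BWG G) := insert (c.N (c.k+1)) ((Finset.range c.k).image c.N)

lemma AL_card : c.AL.card = c.k + 1 := by
  have hinj : Set.InjOn c.M (Finset.range c.k) := by
    intro a ha b hb hab
    simp only [Finset.coe_range, Set.mem_Iio] at ha hb
    by_contra hne
    rcases Nat.lt_or_ge a b with hlt | hge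
    · exact c.M_ne a b (by omega) hlt (by omega) hab
    · exact c.M_ne b a (by omega) (by omega) (by omega) hab.symm
  have hnm : c.M (c.k+1) ∉ (Finset.range c.k).image c.M := by
    simp only [Finset.mem_image, Finset.mem_range, not_exists]
    rintro a ⟨ha, hab⟩
    exact c.M_ne a (c.k+1) (by omega) (by omega) (by omega) hab
  unfold AL
  rw [Finset.card_insert_of_notMem hnm, Finset.card_image_of_injOn hinj, Finset.card_range]

lemma BL_card : c.BL.card = c.k + 1 := by
  have hinj : Set.InjOn c.N (Finset.range c.k) := by
    intro a ha b hb hab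
    simp only [Finset.coe_range, Set.mem_Iio] at ha hb
    by_contra hne
    rcases Nat.lt_or_ge a b with hlt | hge
    · exact c.N_ne a b (by omega) hlt (by omega) hab
    · exact c.N_ne b a (by omega) (by omega) (by omega) hab.symm
  have hnm : c.N (c.k+1) ∉ (Finset.range c.k).image c.N := by
    simp only [Finset.mem_image, Finset.mem_range, not_exists]
    rintro a ⟨ha, hab⟩
    exact c.N_ne a (c.k+1) (by omega) (by omega) (by omega) hab
  unfold BL
  rw [Finset.card_insert_of_notMem hnm, Finset.card_image_of_injOn hinj, Finset.card_range]

lemma AL_subset : c.AL ⊆ c.Aset := by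
  have hLk := c.hLk
  intro t ht
  simp only [AL, Finset.mem_insert, Finset.mem_image, Finset.mem_range] at ht
  rcases ht with rfl | ⟨a, ha, rfl⟩
  · exact c.M_memA (c.k+1) (by omega) (by omega)
  · exact c.M_memA a (by omega) (by omega)

lemma BL_subset : c.BL ⊆ c.Bset := by
  have hLk := c.hLk
  intro t ht
  simp only [BL, Finset.mem_insert, Finset.mem_image, Finset.mem_range] at ht
  rcases ht with rfl | ⟨a, ha, rfl⟩
  · exact c.N_memB (c.k+1) (by omega) (by omega)
  · exact c.N_memB a (by omega) (by omega)

lemma AB_card : c.Aset.card + c.Bset.card ≤ 2 * c.k + 3 := by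
  have hsub : c.Aset ∪ c.Bset ⊆ c.GrayF :=
    Finset.union_subset (Finset.filter_subset _ _) (Finset.filter_subset _ _)
  have h1 := Finset.card_le_card hsub
  have h2 := c.grayF_card
  rw [Finset.card_union_of_disjoint c.disjAB] at h1
  omega

lemma gray_eq_union (hc : 2 * c.k + 3 ≤ c.Aset.card + c.Bset.card) :
    c.GrayF = c.Aset ∪ c.Bset := by
  have hsub : c.Aset ∪ c.Bset ⊆ c.GrayF :=
    Finset.union_subset (Finset.filter_subset _ _) (Finset.filter_subset _ _)
  refine (Finset.eq_of_subset_of_card_le hsub ?_).symm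
  rw [Finset.card_union_of_disjoint c.disjAB]
  have := c.grayF_card
  omega

end Ctx
end BGaux
namespace BGaux
namespace Ctx

variable {G : Type} [DecidableEq G] (c : Ctx G)

lemma F1_eq' (hB : c.Bset = c.BL) : c.N (c.k+1) = c.F1t := by
  have hLk := c.hLk
  have h2 : c.N (c.k+2) ∈ c.BL := hB ▸ c.N_memB (c.k+2) (by omega) (by omega)
  simp only [BL, Finset.mem_insert, Finset.mem_image, Finset.mem_range] at h2
  have h3 : c.N (c.k+2) = c.N (c.k+1) := by
    rcases h2 with h | ⟨a, ha, hab⟩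
    · exact h
    · exact absurd hab (c.N_ne a (c.k+2) (by omega) (by omega) (by omega))
  have hnorth : (c.N (c.k+1)).north = c.diaV := by
    have h4 := c.N_south_succ (c.k+1) (by omega)
    rw [show c.k + 1 + 1 = c.k + 2 from rfl, h3, c.Nk1_south] at h4
    exact h4.symm
  calc c.N (c.k+1) = ⟨(c.N (c.k+1)).color, (c.N (c.k+1)).north, (c.N (c.k+1)).east,
      (c.N (c.k+1)).south, (c.N (c.k+1)).west⟩ := rfl
  _ = _ := by
    rw [c.N_color (c.k+1) (by omega), if_neg (by omega), hnorth,
      c.N_east (c.k+1) (by omega), c.Nk1_south, c.N_west (c.k+1) (by omega)]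
    rfl

lemma B_det (hB : c.Bset = c.BL) :
    ∀ t ∈ c.Bset, t = c.F1t ∨ ∃ i < c.k, t = c.Cver i := by
  have hLk := c.hLk; have hk := c.hk
  intro t ht
  rw [hB] at ht
  simp only [BL, Finset.mem_insert, Finset.mem_image, Finset.mem_range] at ht
  rcases ht with rfl | ⟨a, ha, rfl⟩
  · exact Or.inl (c.F1_eq' hB)
  · exact Or.inr ⟨c.k - a - 1, by omega, c.N_eq_Cver a ha⟩

lemma B_north_ne (hB : c.Bset = c.BL) : ∀ t ∈ c.Bset, t.north ≠ c.bulV := by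
  intro t ht
  rcases c.B_det hB t ht with rfl | ⟨i, hi, rfl⟩
  · exact c.diaV_ne_bulV
  · exact c.cV_ne_bulV i (by omega)

lemma B_east_eq (hB : c.Bset = c.BL) : ∀ t ∈ c.Bset, t.east = c.bulH := by
  intro t ht
  rcases c.B_det hB t ht with rfl | ⟨i, hi, rfl⟩ <;> rfl

lemma B_north_opts (hB : c.Bset = c.BL) :
    ∀ t ∈ c.Bset, t.north = c.diaV ∨ ∃ i < c.k, t.north = c.cV i := by
  intro t ht
  rcases c.B_det hB t ht with rfl | ⟨i, hi, rfl⟩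
  · exact Or.inl rfl
  · exact Or.inr ⟨i, hi, rfl⟩

lemma B_south_opts (hB : c.Bset = c.BL) :
    ∀ t ∈ c.Bset, t.south = c.diaV ∨ ∃ i, 1 ≤ i ∧ i ≤ c.k ∧ t.south = c.cV i := by
  intro t ht
  rcases c.B_det hB t ht with rfl | ⟨i, hi, rfl⟩
  · exact Or.inl rfl
  · exact Or.inr ⟨i+1, by omega, by omega, rfl⟩

lemma F2_eq' (hA : c.Aset = c.AL) : c.M (c.k+1) = c.F2t := by
  have hLk := c.hLk
  have h2 : c.M (c.k+2) ∈ c.AL := hA ▸ c.M_memA (c.k+2) (by omega) (by omega)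
  simp only [AL, Finset.mem_insert, Finset.mem_image, Finset.mem_range] at h2
  have h3 : c.M (c.k+2) = c.M (c.k+1) := by
    rcases h2 with h | ⟨a, ha, hab⟩
    · exact h
    · exact absurd hab (c.M_ne a (c.k+2) (by omega) (by omega) (by omega))
  have heast : (c.M (c.k+1)).east = c.diaH := by
    have h4 := c.M_west_succ (c.k+1) (by omega)
    rw [show c.k + 1 + 1 = c.k + 2 from rfl, h3, c.Mk1_west] at h4
    exact h4.symm
  calc c.M (c.k+1) = ⟨(c.M (c.k+1)).color, (c.M (c.k+1)).north, (c.M (c.k+1)).east,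
      (c.M (c.k+1)).south, (c.M (c.k+1)).west⟩ := rfl
  _ = _ := by
    rw [c.M_color (c.k+1) (by omega), if_neg (by omega), heast,
      c.M_north (c.k+1) (by omega), c.M_south (c.k+1) (by omega), c.Mk1_west]
    rfl

lemma A_det (hA : c.Aset = c.AL) :
    ∀ t ∈ c.Aset, t = c.F2t ∨ ∃ i < c.k, t = c.Chor i := by
  have hLk := c.hLk; have hk := c.hk
  intro t ht
  rw [hA] at ht
  simp only [AL, Finset.mem_insert, Finset.mem_image, Finset.mem_range] at ht
  rcases ht with rfl | ⟨a, ha, rfl⟩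
  · exact Or.inl (c.F2_eq' hA)
  · exact Or.inr ⟨c.k - a - 1, by omega, c.M_eq_Chor a ha⟩

lemma A_north_eq (hA : c.Aset = c.AL) : ∀ t ∈ c.Aset, t.north = c.bulV := by
  intro t ht
  rcases c.A_det hA t ht with rfl | ⟨i, hi, rfl⟩ <;> rfl

lemma A_east_ne (hA : c.Aset = c.AL) : ∀ t ∈ c.Aset, t.east ≠ c.bulH := by
  intro t ht
  rcases c.A_det hA t ht with rfl | ⟨i, hi, rfl⟩
  · exact c.diaH_ne_bulH
  · exact c.cH_ne_bulH i (by omega)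

lemma A_east_opts (hA : c.Aset = c.AL) :
    ∀ t ∈ c.Aset, t.east = c.diaH ∨ ∃ i < c.k, t.east = c.cH i := by
  intro t ht
  rcases c.A_det hA t ht with rfl | ⟨i, hi, rfl⟩
  · exact Or.inl rfl
  · exact Or.inr ⟨i, hi, rfl⟩

lemma A_west_opts (hA : c.Aset = c.AL) :
    ∀ t ∈ c.Aset, t.west = c.diaH ∨ ∃ i, 1 ≤ i ∧ i ≤ c.k ∧ t.west = c.cH i := by
  intro t ht
  rcases c.A_det hA t ht with rfl | ⟨i, hi, rfl⟩
  · exact Or.inl rfl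
  · exact Or.inr ⟨i+1, by omega, by omega, rfl⟩

lemma Bcard_le : c.Bset.card ≤ c.k + 1 := by
  have hLk := c.hLk; have h2w := c.h2Lw; have h2h := c.h2Lh
  by_contra hBc
  have hAcard : c.Aset.card ≤ c.k + 1 := by have := c.AB_card; omega
  have hA : c.Aset = c.AL :=
    (Finset.eq_of_subset_of_card_le c.AL_subset (by rw [c.AL_card]; omega)).symm
  -- the tile O' in the left outer gadget column, on row L-2
  have hO'col : (c.f (c.L * c.w - 1) (c.L - 2)).color = BWG.gray := by
    rw [c.col_col1 (c.L - 2) (by omega), if_pos]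
    rw [show c.L - 2 + 1 = c.L - 1 from by omega, Nat.mod_eq_of_lt (by omega)]
  have hO'below : (c.f (c.L * c.w - 1) (c.L - 3)).color = BWG.black := by
    rw [c.col_col1 (c.L - 3) (by omega), if_neg]
    rw [show c.L - 3 + 1 = c.L - 2 from by omega, Nat.mod_eq_of_lt (by omega)]; omega
  have hO'south : (c.f (c.L * c.w - 1) (c.L - 2)).south = c.bulV := by
    have := c.south_bulV (c.L * c.w - 1) (c.L - 3) (by omega) (by omega) hO'below
    rw [show c.L - 3 + 1 = c.L - 2 from by omega] at this
    exact this
  have hO'A : c.f (c.L * c.w - 1) (c.L - 2) ∈ c.Aset :=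
    c.mem_Aset.mpr ⟨c.mem _ _ (by omega) (by omega), hO'col, hO'south⟩
  have hNw : (c.N (c.L - 2)).west = (c.f (c.L * c.w - 1) (c.L - 2)).east := by
    have := c.adjW (c.L * c.w - 1) (c.L - 2) (by omega) (by omega)
    rw [show c.L * c.w - 1 + 1 = c.L * c.w from by omega] at this
    exact this
  have hNB : c.N (c.L - 2) ∉ c.Bset := by
    intro hmem
    exact c.A_east_ne hA _ hO'A (hNw ▸ (c.mem_Bset.mp hmem).2.2)
  have hNG : c.N (c.L - 2) ∈ c.GrayF := c.mem_GrayF.mpr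
    ⟨c.N_mem _ (by omega), by rw [c.N_color _ (by omega), if_neg (by omega)]⟩
  have hU : c.GrayF = c.Aset ∪ c.Bset := by
    refine c.gray_eq_union ?_
    rw [hA, c.AL_card]; omega
  have hNA : c.N (c.L - 2) ∈ c.Aset := by
    rw [hU] at hNG
    rcases Finset.mem_union.mp hNG with h | h
    · exact h
    · exact absurd h hNB
  have hN1s : (c.N (c.L - 1)).south = c.bulV := by
    have := c.N_south_succ (c.L - 2) (by omega)
    rw [show c.L - 2 + 1 = c.L - 1 from by omega] at this
    rw [this, c.A_north_eq hA _ hNA]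
  have hN1w : (c.N (c.L - 1)).west = c.bulH := by
    refine c.N_west_gen (c.L - 1) (by omega) ?_
    rw [show c.L - 1 + 1 = c.L from by omega, Nat.mod_self]; omega
  have hbl := c.black_of_bulbul (c.N_mem (c.L - 1) (by omega)) hN1s hN1w
  have hcol := c.N_color (c.L - 1) (by omega)
  rw [hbl] at hcol
  simp [blackT, show c.L - 1 ≠ c.k from by omega] at hcol

lemma Bset_eq : c.Bset = c.BL :=
  (Finset.eq_of_subset_of_card_le c.BL_subset (by rw [c.BL_card]; exact c.Bcard_le)).symm

lemma Acard_le : c.Aset.card ≤ c.k + 1 := by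
  have hLk := c.hLk; have h2w := c.h2Lw; have h2h := c.h2Lh
  by_contra hAc
  have hB := c.Bset_eq
  -- the tile O in the lower outer gadget row, on column L-2
  have hOcol : (c.f (c.L - 2) (c.L * c.h - 1)).color = BWG.gray := by
    rw [c.col_row1 (c.L - 2) (by omega), if_pos]
    rw [show c.L - 2 + 1 = c.L - 1 from by omega, Nat.mod_eq_of_lt (by omega)]
  have hOleft : (c.f (c.L - 3) (c.L * c.h - 1)).color = BWG.black := by
    rw [c.col_row1 (c.L - 3) (by omega), if_neg]
    rw [show c.L - 3 + 1 = c.L - 2 from by omega, Nat.mod_eq_of_lt (by omega)]; omega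
  have hOwest : (c.f (c.L - 2) (c.L * c.h - 1)).west = c.bulH := by
    have := c.west_bulH (c.L - 3) (c.L * c.h - 1) (by omega) (by omega) hOleft
    rw [show c.L - 3 + 1 = c.L - 2 from by omega] at this
    exact this
  have hOB : c.f (c.L - 2) (c.L * c.h - 1) ∈ c.Bset :=
    c.mem_Bset.mpr ⟨c.mem _ _ (by omega) (by omega), hOcol, hOwest⟩
  have hMs : (c.M (c.L - 2)).south = (c.f (c.L - 2) (c.L * c.h - 1)).north := by
    have := c.adjS (c.L - 2) (c.L * c.h - 1) (by omega) (by omega)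
    rw [show c.L * c.h - 1 + 1 = c.L * c.h from by omega] at this
    exact this
  have hMA : c.M (c.L - 2) ∉ c.Aset := by
    intro hmem
    exact c.B_north_ne hB _ hOB (hMs ▸ (c.mem_Aset.mp hmem).2.2)
  have hMG : c.M (c.L - 2) ∈ c.GrayF := c.mem_GrayF.mpr
    ⟨c.M_mem _ (by omega), by rw [c.M_color _ (by omega), if_neg (by omega)]⟩
  have hU : c.GrayF = c.Aset ∪ c.Bset := by
    refine c.gray_eq_union ?_
    rw [hB, c.BL_card]; omega
  have hMB : c.M (c.L - 2) ∈ c.Bset := by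
    rw [hU] at hMG
    rcases Finset.mem_union.mp hMG with h | h
    · exact absurd h hMA
    · exact h
  have hM1w : (c.M (c.L - 1)).west = c.bulH := by
    have := c.M_west_succ (c.L - 2) (by omega)
    rw [show c.L - 2 + 1 = c.L - 1 from by omega] at this
    rw [this, c.B_east_eq hB _ hMB]
  have hM1s : (c.M (c.L - 1)).south = c.bulV := by
    refine c.M_south_gen (c.L - 1) (by omega) ?_
    rw [show c.L - 1 + 1 = c.L from by omega, Nat.mod_self]; omega
  have hbl := c.black_of_bulbul (c.M_mem (c.L - 1) (by omega)) hM1s hM1w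
  have hcol := c.M_color (c.L - 1) (by omega)
  rw [hbl] at hcol
  simp [blackT, show c.L - 1 ≠ c.k from by omega] at hcol

lemma Aset_eq : c.Aset = c.AL :=
  (Finset.eq_of_subset_of_card_le c.AL_subset (by rw [c.AL_card]; exact c.Acard_le)).symm

lemma F1_eq : c.N (c.k+1) = c.F1t := c.F1_eq' c.Bset_eq
lemma F2_eq : c.M (c.k+1) = c.F2t := c.F2_eq' c.Aset_eq

end Ctx
end BGaux
namespace BGaux
namespace Ctx

variable {G : Type} [DecidableEq G] (c : Ctx G)

lemma westDet {t : Tile BWG G} (ht : t ∈ c.T.tiles) (hs : t.south = c.bulV)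
    {m : ℕ} (hm : m ≤ c.k) (hw : t.west = c.cH m) : t = c.M (c.k - m) := by
  have hLk := c.hLk
  refine c.det ht (c.M_mem (c.k - m) (by omega)) ?_ ?_
  · rw [hs, c.M_south (c.k - m) (by omega)]
  · rw [hw, c.M_west (c.k - m) (by omega), show c.k - (c.k - m) = m from by omega]

lemma westDetDia {t : Tile BWG G} (ht : t ∈ c.T.tiles) (hs : t.south = c.bulV)
    (hw : t.west = c.diaH) : t = c.F2t := by
  have hLk := c.hLk
  rw [← c.F2_eq]
  refine c.det ht (c.M_mem (c.k + 1) (by omega)) ?_ ?_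
  · rw [hs, c.M_south (c.k + 1) (by omega)]
  · rw [hw, c.Mk1_west]

lemma southDet {t : Tile BWG G} (ht : t ∈ c.T.tiles) (hw : t.west = c.bulH)
    {m : ℕ} (hm : m ≤ c.k) (hs : t.south = c.cV m) : t = c.N (c.k - m) := by
  have hLk := c.hLk
  refine c.det ht (c.N_mem (c.k - m) (by omega)) ?_ ?_
  · rw [hs, c.N_south (c.k - m) (by omega), show c.k - (c.k - m) = m from by omega]
  · rw [hw, c.N_west (c.k - m) (by omega)]

lemma southDetDia {t : Tile BWG G} (ht : t ∈ c.T.tiles) (hw : t.west = c.bulH)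
    (hs : t.south = c.diaV) : t = c.F1t := by
  have hLk := c.hLk
  rw [← c.F1_eq]
  refine c.det ht (c.N_mem (c.k + 1) (by omega)) ?_ ?_
  · rw [hs, c.Nk1_south]
  · rw [hw, c.N_west (c.k + 1) (by omega)]

section Supertile

variable (x y : ℕ)

lemma T_bound (hx : x < c.w) (hy : y < c.h) (i : ℕ) (hi : 1 ≤ i) (hi2 : i ≤ c.L - 1) :
    x * c.L + i - 1 < c.L * c.w + 2 ∧ y * c.L + c.L - 2 < c.L * c.h + 2 := by
  have h13 := c.hL
  have h1 := nat_mul_bound (L := c.L) hx (show i < c.L from by omega)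
  have h2 := nat_mul_bound (L := c.L) hy (show c.L - 1 < c.L from by omega)
  omega

lemma T_mem (hx : x < c.w) (hy : y < c.h) (i : ℕ) (hi : 1 ≤ i) (hi2 : i ≤ c.L - 1) :
    c.f (x * c.L + i - 1) (y * c.L + c.L - 2) ∈ c.T.tiles := by
  obtain ⟨h1, h2⟩ := c.T_bound x y hx hy i hi hi2
  exact c.mem _ _ h1 h2

lemma T_color (hx : x < c.w) (hy : y < c.h) (i : ℕ) (hi : 1 ≤ i) (hi2 : i ≤ c.L - 1) :
    (c.f (x * c.L + i - 1) (y * c.L + c.L - 2)).color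
      = if i = c.P x y + 1 then BWG.white else BWG.gray := by
  have h13 := c.hL
  have h := c.col_super x y i (c.L - 1) hx hy (by omega) (by omega)
    (Or.inr hi) (Or.inr (by omega))
  rw [show y * c.L + (c.L - 1) - 1 = y * c.L + c.L - 2 from by omega] at h
  rw [h, superPat_toprow h13 hi]

lemma T_south (hx : x < c.w) (hy : y < c.h) (i : ℕ) (hi : 1 ≤ i) (hi2 : i ≤ c.L - 2) :
    (c.f (x * c.L + i - 1) (y * c.L + c.L - 2)).south = c.bulV := by
  have h13 := c.hL
  obtain ⟨h1, h2⟩ := c.T_bound x y hx hy i hi (by omega)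
  have hb := c.black_at x y i (c.L - 2) hx hy hi hi2 (by omega) (by omega)
  rw [show y * c.L + (c.L - 2) - 1 = y * c.L + c.L - 3 from by omega] at hb
  have := c.south_bulV (x * c.L + i - 1) (y * c.L + c.L - 3) h1 (by omega) hb
  rw [show y * c.L + c.L - 3 + 1 = y * c.L + c.L - 2 from by omega] at this
  exact this

lemma T_A (hx : x < c.w) (hy : y < c.h) (i : ℕ) (hi : 1 ≤ i) (hi2 : i ≤ c.L - 2) (hne : i ≠ c.P x y + 1) :
    c.f (x * c.L + i - 1) (y * c.L + c.L - 2) ∈ c.Aset := by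
  have h13 := c.hL
  refine c.mem_Aset.mpr ⟨c.T_mem x y hx hy i hi (by omega), ?_,
    c.T_south x y hx hy i hi hi2⟩
  rw [c.T_color x y hx hy i hi (by omega), if_neg hne]

lemma T_west_succ (hx : x < c.w) (hy : y < c.h) (i : ℕ) (hi : 1 ≤ i) (hi2 : i + 1 ≤ c.L - 1) :
    (c.f (x * c.L + i) (y * c.L + c.L - 2)).west
      = (c.f (x * c.L + i - 1) (y * c.L + c.L - 2)).east := by
  have h13 := c.hL
  obtain ⟨h1, h2⟩ := c.T_bound x y hx hy (i+1) (by omega) hi2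
  have := c.adjW (x * c.L + i - 1) (y * c.L + c.L - 2)
    (by omega) h2
  rw [show x * c.L + i - 1 + 1 = x * c.L + i from by omega] at this
  exact this

lemma no_follow (hx : x < c.w) (hy : y < c.h) : ∀ d, d ≤ c.k → ∀ pos, c.P x y + 2 ≤ pos → pos + d ≤ c.L - 2 →
    c.f (x * c.L + pos - 1) (y * c.L + c.L - 2) ≠ c.M (c.k - d) := by
  have hLk := c.hLk
  have hPk := c.hPk x hx y hy
  intro d
  induction d with
  | zero =>
    intro _ pos hpos hpd heq
    have h1 : (c.f (x * c.L + pos - 1) (y * c.L + c.L - 2)).color = BWG.gray := by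
      rw [c.T_color x y hx hy pos (by omega) (by omega), if_neg (by omega)]
    rw [heq, Nat.sub_zero, c.M_color c.k (by omega), if_pos rfl] at h1
    exact absurd h1 (by simp)
  | succ d ih =>
    intro hd pos hpos hpd heq
    have heast : (c.M (c.k - (d+1))).east = c.cH d := by
      rw [c.M_east (c.k - (d+1)) (by omega), show c.k - (c.k - (d+1)) - 1 = d from by omega]
    have hwest : (c.f (x * c.L + (pos + 1) - 1) (y * c.L + c.L - 2)).west = c.cH d := by
      rw [show x * c.L + (pos + 1) - 1 = x * c.L + pos from by omega,
        c.T_west_succ x y hx hy pos (by omega) (by omega), heq, heast]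
    have := c.westDet (c.T_mem x y hx hy (pos+1) (by omega) (by omega))
      (c.T_south x y hx hy (pos+1) (by omega) (by omega)) (by omega : d ≤ c.k) hwest
    exact ih (by omega) (pos+1) (by omega) (by omega) this

lemma T_F2 (hx : x < c.w) (hy : y < c.h) : ∀ i, c.P x y + 2 ≤ i → i ≤ c.L - 2 →
    c.f (x * c.L + i - 1) (y * c.L + c.L - 2) = c.F2t := by
  have hLk := c.hLk
  have hPk := c.hPk x hx y hy
  have hP1 := c.hP1 x hx y hy
  have hbase : ∀ hle : c.P x y + 2 ≤ c.L - 2,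
      c.f (x * c.L + (c.P x y + 2) - 1) (y * c.L + c.L - 2) = c.F2t := by
    intro hle
    have hA := c.T_A x y hx hy (c.P x y + 2) (by omega) (by omega) (by omega)
    rcases c.A_det c.Aset_eq _ hA with h | ⟨j, hj, h⟩
    · exact h
    · exfalso
      have hMeq : c.Chor j = c.M (c.k - (j+1)) := by
        rw [c.M_eq_Chor (c.k - (j+1)) (by omega),
          show c.k - (c.k - (j+1)) - 1 = j from by omega]
      rw [hMeq] at h
      exact c.no_follow x y hx hy (j+1) (by omega) (c.P x y + 2) (by omega) (by omega) h
  intro i hi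
  induction i with
  | zero => omega
  | succ n ih =>
    intro hn1
    rcases Nat.lt_or_ge n (c.P x y + 2) with hlt | hge
    · have : n + 1 = c.P x y + 2 := by omega
      rw [this]; exact hbase (by omega)
    · have hprev := ih (by omega) (by omega)
      have hwest : (c.f (x * c.L + (n+1) - 1) (y * c.L + c.L - 2)).west = c.diaH := by
        rw [show x * c.L + (n + 1) - 1 = x * c.L + n from by omega,
          c.T_west_succ x y hx hy n (by omega) (by omega), hprev]
        rfl
      exact c.westDetDia (c.T_mem x y hx hy (n+1) (by omega) (by omega))
        (c.T_south x y hx hy (n+1) (by omega) (by omega)) hwest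

lemma T_D2_aux (hx : x < c.w) (hy : y < c.h) :
    c.f (x * c.L + (c.P x y + 1) - 1) (y * c.L + c.L - 2) = c.D2t ∧
    c.f (x * c.L + c.P x y - 1) (y * c.L + c.L - 2) = c.Chor 0 := by
  have hLk := c.hLk
  have hPk := c.hPk x hx y hy
  have hP1 := c.hP1 x hx y hy
  have hA := c.T_A x y hx hy (c.P x y) (by omega) (by omega) (by omega)
  have hwhite : (c.f (x * c.L + (c.P x y + 1) - 1) (y * c.L + c.L - 2)).color = BWG.white := by
    rw [c.T_color x y hx hy (c.P x y + 1) (by omega) (by omega), if_pos rfl]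
  have hmem1 := c.T_mem x y hx hy (c.P x y + 1) (by omega) (by omega)
  have hsouth1 := c.T_south x y hx hy (c.P x y + 1) (by omega) (by omega)
  rcases c.A_det c.Aset_eq _ hA with h | ⟨j, hj, h⟩
  · exfalso
    have hwest : (c.f (x * c.L + (c.P x y + 1) - 1) (y * c.L + c.L - 2)).west = c.diaH := by
      rw [show x * c.L + (c.P x y + 1) - 1 = x * c.L + c.P x y from by omega,
        c.T_west_succ x y hx hy (c.P x y) (by omega) (by omega), h]
      rfl
    have := c.westDetDia hmem1 hsouth1 hwest
    rw [this] at hwhite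
    exact absurd hwhite (by simp [F2t])
  · have hwest : (c.f (x * c.L + (c.P x y + 1) - 1) (y * c.L + c.L - 2)).west = c.cH j := by
      rw [show x * c.L + (c.P x y + 1) - 1 = x * c.L + c.P x y from by omega,
        c.T_west_succ x y hx hy (c.P x y) (by omega) (by omega), h]
      rfl
    have hdet := c.westDet hmem1 hsouth1 (by omega : j ≤ c.k) hwest
    have hj0 : j = 0 := by
      by_contra hj0
      rw [hdet, c.M_color (c.k - j) (by omega), if_neg (by omega)] at hwhite
      exact absurd hwhite (by simp)
    subst hj0
    rw [Nat.sub_zero] at hdet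
    exact ⟨hdet.trans c.Mk_eq_D2, h⟩

lemma T_pre (hx : x < c.w) (hy : y < c.h) : ∀ i, 1 ≤ i → i ≤ c.P x y →
    c.f (x * c.L + i - 1) (y * c.L + c.L - 2) = c.Chor (c.P x y - i) := by
  have hLk := c.hLk
  have hPk := c.hPk x hx y hy
  have hP1 := c.hP1 x hx y hy
  have key : ∀ d, d ≤ c.P x y - 1 →
      c.f (x * c.L + (c.P x y - d) - 1) (y * c.L + c.L - 2) = c.Chor d := by
    intro d
    induction d with
    | zero =>
      intro _
      rw [Nat.sub_zero]
      exact (c.T_D2_aux x y hx hy).2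
    | succ d ih =>
      intro hd
      have hprev := ih (by omega)
      have hA := c.T_A x y hx hy (c.P x y - (d+1)) (by omega) (by omega) (by omega)
      have heast : (c.f (x * c.L + (c.P x y - (d+1)) - 1) (y * c.L + c.L - 2)).east
          = c.cH (d+1) := by
        have hws := c.T_west_succ x y hx hy (c.P x y - (d+1)) (by omega) (by omega)
        rw [show x * c.L + (c.P x y - (d+1)) = x * c.L + (c.P x y - d) - 1 from by omega,
          hprev] at hws
        rw [show x * c.L + (c.P x y - (d+1)) - 1 = x * c.L + (c.P x y - d) - 1 - 1
          from by omega]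
        exact hws.symm
      rcases c.A_det c.Aset_eq _ hA with h | ⟨j, hj', h⟩
      · rw [h] at heast
        exact absurd heast (c.diaH_ne_cH (d+1) (by omega))
      · rw [h] at heast
        have hjd := c.cH_inj j (d+1) (by omega) (by omega) heast
        rw [h, hjd]
  intro i hi1 hi2
  have := key (c.P x y - i) (by omega)
  rw [show c.P x y - (c.P x y - i) = i from by omega] at this
  exact this

end Supertile

end Ctx
end BGaux
namespace BGaux
namespace Ctx

variable {G : Type} [DecidableEq G] (c : Ctx G)

section SupertileV

variable (x y : ℕ)

lemma C_bound (hx : x < c.w) (hy : y < c.h) (j : ℕ) (hj : 1 ≤ j) (hj2 : j ≤ c.L - 1) :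
    x * c.L + c.L - 2 < c.L * c.w + 2 ∧ y * c.L + j - 1 < c.L * c.h + 2 := by
  have h13 := c.hL
  have h1 := nat_mul_bound (L := c.L) hx (show c.L - 1 < c.L from by omega)
  have h2 := nat_mul_bound (L := c.L) hy (show j < c.L from by omega)
  omega

lemma C_mem (hx : x < c.w) (hy : y < c.h) (j : ℕ) (hj : 1 ≤ j) (hj2 : j ≤ c.L - 1) :
    c.f (x * c.L + c.L - 2) (y * c.L + j - 1) ∈ c.T.tiles := by
  obtain ⟨h1, h2⟩ := c.C_bound x y hx hy j hj hj2
  exact c.mem _ _ h1 h2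

lemma C_color (hx : x < c.w) (hy : y < c.h) (j : ℕ) (hj : 1 ≤ j) (hj2 : j ≤ c.L - 2) :
    (c.f (x * c.L + c.L - 2) (y * c.L + j - 1)).color
      = if j = c.P x y + 1 then BWG.white else BWG.gray := by
  have h13 := c.hL
  have h := c.col_super x y (c.L - 1) j hx hy (by omega) (by omega)
    (Or.inr (by omega)) (Or.inr hj)
  rw [show x * c.L + (c.L - 1) - 1 = x * c.L + c.L - 2 from by omega] at h
  rw [h, superPat_rightcol h13 hj hj2]

lemma C_west (hx : x < c.w) (hy : y < c.h) (j : ℕ) (hj : 1 ≤ j) (hj2 : j ≤ c.L - 2) :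
    (c.f (x * c.L + c.L - 2) (y * c.L + j - 1)).west = c.bulH := by
  have h13 := c.hL
  obtain ⟨h1, h2⟩ := c.C_bound x y hx hy j hj (by omega)
  have hb := c.black_at x y (c.L - 2) j hx hy (by omega) (by omega) hj hj2
  rw [show x * c.L + (c.L - 2) - 1 = x * c.L + c.L - 3 from by omega] at hb
  have := c.west_bulH (x * c.L + c.L - 3) (y * c.L + j - 1) (by omega) h2 hb
  rw [show x * c.L + c.L - 3 + 1 = x * c.L + c.L - 2 from by omega] at this
  exact this

lemma C_B (hx : x < c.w) (hy : y < c.h) (j : ℕ) (hj : 1 ≤ j) (hj2 : j ≤ c.L - 2)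
    (hne : j ≠ c.P x y + 1) :
    c.f (x * c.L + c.L - 2) (y * c.L + j - 1) ∈ c.Bset := by
  have h13 := c.hL
  refine c.mem_Bset.mpr ⟨c.C_mem x y hx hy j hj (by omega), ?_,
    c.C_west x y hx hy j hj hj2⟩
  rw [c.C_color x y hx hy j hj hj2, if_neg hne]

lemma C_south_succ (hx : x < c.w) (hy : y < c.h) (j : ℕ) (hj : 1 ≤ j) (hj2 : j + 1 ≤ c.L - 1) :
    (c.f (x * c.L + c.L - 2) (y * c.L + j)).south
      = (c.f (x * c.L + c.L - 2) (y * c.L + j - 1)).north := by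
  have h13 := c.hL
  obtain ⟨h1, h2⟩ := c.C_bound x y hx hy (j+1) (by omega) hj2
  have := c.adjS (x * c.L + c.L - 2) (y * c.L + j - 1) h1 (by omega)
  rw [show y * c.L + j - 1 + 1 = y * c.L + j from by omega] at this
  exact this

lemma no_followN (hx : x < c.w) (hy : y < c.h) : ∀ d, d ≤ c.k →
    ∀ pos, c.P x y + 2 ≤ pos → pos + d ≤ c.L - 2 →
    c.f (x * c.L + c.L - 2) (y * c.L + pos - 1) ≠ c.N (c.k - d) := by
  have hLk := c.hLk
  have hPk := c.hPk x hx y hy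
  intro d
  induction d with
  | zero =>
    intro _ pos hpos hpd heq
    have h1 : (c.f (x * c.L + c.L - 2) (y * c.L + pos - 1)).color = BWG.gray := by
      rw [c.C_color x y hx hy pos (by omega) (by omega), if_neg (by omega)]
    rw [heq, Nat.sub_zero, c.N_color c.k (by omega), if_pos rfl] at h1
    exact absurd h1 (by simp)
  | succ d ih =>
    intro hd pos hpos hpd heq
    have hnorth : (c.N (c.k - (d+1))).north = c.cV d := by
      rw [c.N_north (c.k - (d+1)) (by omega), show c.k - (c.k - (d+1)) - 1 = d from by omega]
    have hsouth : (c.f (x * c.L + c.L - 2) (y * c.L + (pos + 1) - 1)).south = c.cV d := by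
      rw [show y * c.L + (pos + 1) - 1 = y * c.L + pos from by omega,
        c.C_south_succ x y hx hy pos (by omega) (by omega), heq, hnorth]
    have := c.southDet (c.C_mem x y hx hy (pos+1) (by omega) (by omega))
      (c.C_west x y hx hy (pos+1) (by omega) (by omega)) (by omega : d ≤ c.k) hsouth
    exact ih (by omega) (pos+1) (by omega) (by omega) this

lemma C_F1 (hx : x < c.w) (hy : y < c.h) : ∀ j, c.P x y + 2 ≤ j → j ≤ c.L - 2 →
    c.f (x * c.L + c.L - 2) (y * c.L + j - 1) = c.F1t := by
  have hLk := c.hLk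
  have hPk := c.hPk x hx y hy
  have hP1 := c.hP1 x hx y hy
  have hbase : ∀ hle : c.P x y + 2 ≤ c.L - 2,
      c.f (x * c.L + c.L - 2) (y * c.L + (c.P x y + 2) - 1) = c.F1t := by
    intro hle
    have hB := c.C_B x y hx hy (c.P x y + 2) (by omega) (by omega) (by omega)
    rcases c.B_det c.Bset_eq _ hB with h | ⟨j, hj, h⟩
    · exact h
    · exfalso
      have hNeq : c.Cver j = c.N (c.k - (j+1)) := by
        rw [c.N_eq_Cver (c.k - (j+1)) (by omega),
          show c.k - (c.k - (j+1)) - 1 = j from by omega]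
      rw [hNeq] at h
      exact c.no_followN x y hx hy (j+1) (by omega) (c.P x y + 2) (by omega) (by omega) h
  intro j hj
  induction j with
  | zero => omega
  | succ n ih =>
    intro hn1
    rcases Nat.lt_or_ge n (c.P x y + 2) with hlt | hge
    · have : n + 1 = c.P x y + 2 := by omega
      rw [this]; exact hbase (by omega)
    · have hprev := ih (by omega) (by omega)
      have hsouth : (c.f (x * c.L + c.L - 2) (y * c.L + (n+1) - 1)).south = c.diaV := by
        rw [show y * c.L + (n + 1) - 1 = y * c.L + n from by omega,
          c.C_south_succ x y hx hy n (by omega) (by omega), hprev]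
        rfl
      exact c.southDetDia (c.C_mem x y hx hy (n+1) (by omega) (by omega))
        (c.C_west x y hx hy (n+1) (by omega) (by omega)) hsouth

lemma C_D1_aux (hx : x < c.w) (hy : y < c.h) :
    c.f (x * c.L + c.L - 2) (y * c.L + (c.P x y + 1) - 1) = c.D1t ∧
    c.f (x * c.L + c.L - 2) (y * c.L + c.P x y - 1) = c.Cver 0 := by
  have hLk := c.hLk
  have hPk := c.hPk x hx y hy
  have hP1 := c.hP1 x hx y hy
  have hB := c.C_B x y hx hy (c.P x y) (by omega) (by omega) (by omega)
  have hwhite : (c.f (x * c.L + c.L - 2) (y * c.L + (c.P x y + 1) - 1)).color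
      = BWG.white := by
    rw [c.C_color x y hx hy (c.P x y + 1) (by omega) (by omega), if_pos rfl]
  have hmem1 := c.C_mem x y hx hy (c.P x y + 1) (by omega) (by omega)
  have hwest1 := c.C_west x y hx hy (c.P x y + 1) (by omega) (by omega)
  rcases c.B_det c.Bset_eq _ hB with h | ⟨j, hj, h⟩
  · exfalso
    have hsouth : (c.f (x * c.L + c.L - 2) (y * c.L + (c.P x y + 1) - 1)).south = c.diaV := by
      rw [show y * c.L + (c.P x y + 1) - 1 = y * c.L + c.P x y from by omega,
        c.C_south_succ x y hx hy (c.P x y) (by omega) (by omega), h]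
      rfl
    have := c.southDetDia hmem1 hwest1 hsouth
    rw [this] at hwhite
    exact absurd hwhite (by simp [F1t])
  · have hsouth : (c.f (x * c.L + c.L - 2) (y * c.L + (c.P x y + 1) - 1)).south = c.cV j := by
      rw [show y * c.L + (c.P x y + 1) - 1 = y * c.L + c.P x y from by omega,
        c.C_south_succ x y hx hy (c.P x y) (by omega) (by omega), h]
      rfl
    have hdet := c.southDet hmem1 hwest1 (by omega : j ≤ c.k) hsouth
    have hj0 : j = 0 := by
      by_contra hj0
      rw [hdet, c.N_color (c.k - j) (by omega), if_neg (by omega)] at hwhite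
      exact absurd hwhite (by simp)
    subst hj0
    rw [Nat.sub_zero] at hdet
    exact ⟨hdet.trans c.Nk_eq_D1, h⟩

lemma C_pre (hx : x < c.w) (hy : y < c.h) : ∀ j, 1 ≤ j → j ≤ c.P x y →
    c.f (x * c.L + c.L - 2) (y * c.L + j - 1) = c.Cver (c.P x y - j) := by
  have hLk := c.hLk
  have hPk := c.hPk x hx y hy
  have hP1 := c.hP1 x hx y hy
  have key : ∀ d, d ≤ c.P x y - 1 →
      c.f (x * c.L + c.L - 2) (y * c.L + (c.P x y - d) - 1) = c.Cver d := by
    intro d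
    induction d with
    | zero =>
      intro _
      rw [Nat.sub_zero]
      exact (c.C_D1_aux x y hx hy).2
    | succ d ih =>
      intro hd
      have hprev := ih (by omega)
      have hB := c.C_B x y hx hy (c.P x y - (d+1)) (by omega) (by omega) (by omega)
      have hnorth : (c.f (x * c.L + c.L - 2) (y * c.L + (c.P x y - (d+1)) - 1)).north
          = c.cV (d+1) := by
        have hws := c.C_south_succ x y hx hy (c.P x y - (d+1)) (by omega) (by omega)
        rw [show y * c.L + (c.P x y - (d+1)) = y * c.L + (c.P x y - d) - 1 from by omega,
          hprev] at hws
        rw [show y * c.L + (c.P x y - (d+1)) - 1 = y * c.L + (c.P x y - d) - 1 - 1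
          from by omega]
        exact hws.symm
      rcases c.B_det c.Bset_eq _ hB with h | ⟨j, hj', h⟩
      · rw [h] at hnorth
        exact absurd hnorth (c.diaV_ne_cV (d+1) (by omega))
      · rw [h] at hnorth
        have hjd := c.cV_inj j (d+1) (by omega) (by omega) hnorth
        rw [h, hjd]
  intro j hj1 hj2
  have := key (c.P x y - j) (by omega)
  rw [show c.P x y - (c.P x y - j) = j from by omega] at this
  exact this

end SupertileV

end Ctx
end BGaux
namespace BGaux
namespace Ctx

variable {G : Type} [DecidableEq G] (c : Ctx G)

lemma CT_color (x y : ℕ) (hx : x < c.w) (hy : y < c.h) :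
    (c.f (x * c.L + c.L - 2) (y * c.L + c.L - 2)).color = BWG.gray := by
  have hLk := c.hLk
  have hPk := c.hPk x hx y hy
  have h := c.col_super x y (c.L - 1) (c.L - 1) hx hy (by omega) (by omega)
    (Or.inr (by omega)) (Or.inr (by omega))
  rw [show x * c.L + (c.L - 1) - 1 = x * c.L + c.L - 2 from by omega,
    show y * c.L + (c.L - 1) - 1 = y * c.L + c.L - 2 from by omega] at h
  have h13 := c.hL
  rw [h, superPat_toprow h13 (show (1:ℕ) ≤ c.L - 1 from by omega), if_neg (by omega)]

lemma CT_south (x y : ℕ) (hx : x < c.w) (hy : y < c.h) :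
    (c.f (x * c.L + c.L - 2) (y * c.L + c.L - 2)).south = c.diaV := by
  have hLk := c.hLk
  have hPk := c.hPk x hx y hy
  have h := c.C_south_succ x y hx hy (c.L - 2) (by omega) (by omega)
  rw [show y * c.L + (c.L - 2) = y * c.L + c.L - 2 from by omega] at h
  rw [show y * c.L + c.L - 2 - 1 = y * c.L + (c.L - 2) - 1 from by omega] at h
  rw [h, c.C_F1 x y hx hy (c.L - 2) (by omega) (by omega)]
  rfl

lemma CT_west (x y : ℕ) (hx : x < c.w) (hy : y < c.h) :
    (c.f (x * c.L + c.L - 2) (y * c.L + c.L - 2)).west = c.diaH := by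
  have hLk := c.hLk
  have hPk := c.hPk x hx y hy
  have h := c.T_west_succ x y hx hy (c.L - 2) (by omega) (by omega)
  rw [show x * c.L + (c.L - 2) = x * c.L + c.L - 2 from by omega] at h
  rw [show x * c.L + c.L - 2 - 1 = x * c.L + (c.L - 2) - 1 from by omega] at h
  rw [h, c.T_F2 x y hx hy (c.L - 2) (by omega) (by omega)]
  rfl

lemma CT_props (x y : ℕ) (hx : x < c.w) (hy : y < c.h) :
    c.f (x * c.L + c.L - 2) (y * c.L + c.L - 2) ∈ c.GrayF ∧
    c.f (x * c.L + c.L - 2) (y * c.L + c.L - 2) ∉ c.Aset ∧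
    c.f (x * c.L + c.L - 2) (y * c.L + c.L - 2) ∉ c.Bset := by
  have hLk := c.hLk
  have hmem : c.f (x * c.L + c.L - 2) (y * c.L + c.L - 2) ∈ c.T.tiles := by
    have := c.T_mem x y hx hy (c.L - 1) (by omega) (by omega)
    rw [show x * c.L + (c.L - 1) - 1 = x * c.L + c.L - 2 from by omega] at this
    exact this
  refine ⟨c.mem_GrayF.mpr ⟨hmem, c.CT_color x y hx hy⟩, ?_, ?_⟩
  · intro hA
    exact c.diaV_ne_bulV ((c.CT_south x y hx hy).symm.trans (c.mem_Aset.mp hA).2.2)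
  · intro hB
    exact c.diaH_ne_bulH ((c.CT_west x y hx hy).symm.trans (c.mem_Bset.mp hB).2.2)

lemma outside_unique {t t' : Tile BWG G}
    (htG : t ∈ c.GrayF) (htA : t ∉ c.Aset) (htB : t ∉ c.Bset)
    (ht'G : t' ∈ c.GrayF) (ht'A : t' ∉ c.Aset) (ht'B : t' ∉ c.Bset) : t = t' := by
  by_contra hne
  have hsub : insert t (insert t' (c.Aset ∪ c.Bset)) ⊆ c.GrayF := by
    intro s hs
    rcases Finset.mem_insert.mp hs with rfl | hs
    · exact htG
    rcases Finset.mem_insert.mp hs with rfl | hs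
    · exact ht'G
    exact (Finset.union_subset (Finset.filter_subset _ _) (Finset.filter_subset _ _)) hs
  have hc1 : t' ∉ c.Aset ∪ c.Bset := by
    rw [Finset.mem_union]; tauto
  have hc2 : t ∉ insert t' (c.Aset ∪ c.Bset) := by
    rw [Finset.mem_insert, Finset.mem_union]; tauto
  have hcard : (insert t (insert t' (c.Aset ∪ c.Bset))).card = 2 * c.k + 4 := by
    rw [Finset.card_insert_of_notMem hc2, Finset.card_insert_of_notMem hc1,
      Finset.card_union_of_disjoint c.disjAB, c.Aset_eq, c.AL_card, c.Bset_eq, c.BL_card]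
    omega
  have h1 := Finset.card_le_card hsub
  have h2 := c.grayF_card
  omega

end Ctx
end BGaux
namespace BGaux
namespace Ctx

variable {G : Type} [DecidableEq G] (c : Ctx G)

lemma ea1 : (c.w - 1) * c.L + c.L - 2 = c.L * c.w - 2 := by
  have hww := c.hw
  have hw1 : (c.w - 1) * c.L + c.L = c.L * c.w := by
    calc (c.w-1)*c.L + c.L = (c.w-1+1)*c.L := by ring
    _ = c.w * c.L := by rw [show c.w - 1 + 1 = c.w from by omega]
    _ = c.L * c.w := Nat.mul_comm _ _
  omega

lemma ea2 : 1 * c.L + c.L - 2 = 2 * c.L - 2 := by omega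

lemma eb1 : 0 * c.L + c.L - 2 = c.L - 2 := by omega

lemma eb2 : (c.h - 1) * c.L + c.L - 2 = c.L * c.h - 2 := by
  have hhh := c.hh
  have hh1 : (c.h - 1) * c.L + c.L = c.L * c.h := by
    calc (c.h-1)*c.L + c.L = (c.h-1+1)*c.L := by ring
    _ = c.h * c.L := by rw [show c.h - 1 + 1 = c.h from by omega]
    _ = c.L * c.h := Nat.mul_comm _ _
  omega

lemma CTa_props :
    c.f (c.L * c.w - 2) (2 * c.L - 2) ∈ c.GrayF ∧
    c.f (c.L * c.w - 2) (2 * c.L - 2) ∉ c.Aset ∧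
    c.f (c.L * c.w - 2) (2 * c.L - 2) ∉ c.Bset := by
  have hww := c.hw; have hhh := c.hh
  have h := c.CT_props (c.w - 1) 1 (by omega) (by omega)
  rw [c.ea1, c.ea2] at h
  exact h

lemma CTa_west : (c.f (c.L * c.w - 2) (2 * c.L - 2)).west = c.diaH := by
  have hww := c.hw; have hhh := c.hh
  have h := c.CT_west (c.w - 1) 1 (by omega) (by omega)
  rw [c.ea1, c.ea2] at h
  exact h

lemma CTb_props :
    c.f (c.L - 2) (c.L * c.h - 2) ∈ c.GrayF ∧
    c.f (c.L - 2) (c.L * c.h - 2) ∉ c.Aset ∧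
    c.f (c.L - 2) (c.L * c.h - 2) ∉ c.Bset := by
  have hww := c.hw; have hhh := c.hh
  have h := c.CT_props 0 (c.h - 1) (by omega) (by omega)
  rw [c.eb1, c.eb2] at h
  exact h

lemma CTb_south : (c.f (c.L - 2) (c.L * c.h - 2)).south = c.diaV := by
  have hww := c.hw; have hhh := c.hh
  have h := c.CT_south 0 (c.h - 1) (by omega) (by omega)
  rw [c.eb1, c.eb2] at h
  exact h

lemma Gt_east : (c.f (c.L * c.w - 2) (2 * c.L - 2)).east = c.diaH := by
  have hLk := c.hLk; have h2w := c.h2Lw; have h2h := c.h2Lh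
  have hCTw := c.CTa_west
  have hCTp := c.CTa_props
  have hRgray : (c.f (c.L*c.w-1) (2*c.L-2)).color = BWG.gray := by
    rw [c.col_col1 (2*c.L-2) (by omega), if_pos]
    rw [show 2*c.L-2+1 = c.L + (c.L-1) from by omega, Nat.add_mod_left,
      Nat.mod_eq_of_lt (by omega)]
  have hRbelow : (c.f (c.L*c.w-1) (2*c.L-3)).color = BWG.black := by
    rw [c.col_col1 (2*c.L-3) (by omega), if_neg]
    rw [show 2*c.L-3+1 = c.L + (c.L-2) from by omega, Nat.add_mod_left,
      Nat.mod_eq_of_lt (by omega)]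
    omega
  have hRsouth : (c.f (c.L*c.w-1) (2*c.L-2)).south = c.bulV := by
    have := c.south_bulV (c.L*c.w-1) (2*c.L-3) (by omega) (by omega) hRbelow
    rw [show 2*c.L-3+1 = 2*c.L-2 from by omega] at this
    exact this
  have hRA : c.f (c.L*c.w-1) (2*c.L-2) ∈ c.Aset :=
    c.mem_Aset.mpr ⟨c.mem _ _ (by omega) (by omega), hRgray, hRsouth⟩
  have hRwest : (c.f (c.L*c.w-1) (2*c.L-2)).west = (c.f (c.L*c.w-2) (2*c.L-2)).east := by
    have := c.adjW (c.L*c.w-2) (2*c.L-2) (by omega) (by omega)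
    rw [show c.L*c.w-2+1 = c.L*c.w-1 from by omega] at this
    exact this
  rcases c.A_det c.Aset_eq _ hRA with h | ⟨j, hj, h⟩
  · rw [h] at hRwest
    exact hRwest.symm
  · exfalso
    have hNw : (c.N (2*c.L-2)).west = c.cH j := by
      have h2 := c.adjW (c.L*c.w-1) (2*c.L-2) (by omega) (by omega)
      rw [show c.L*c.w-1+1 = c.L*c.w from by omega, h] at h2
      exact h2
    have hNnotB : c.N (2*c.L-2) ∉ c.Bset := fun hB =>
      c.cH_ne_bulH j (by omega) (hNw.symm.trans (c.mem_Bset.mp hB).2.2)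
    have hN3B : c.N (2*c.L-3) ∈ c.Bset := by
      refine c.mem_Bset.mpr ⟨c.N_mem _ (by omega), ?_, ?_⟩
      · rw [c.N_color _ (by omega), if_neg (by omega)]
      · refine c.N_west_gen _ (by omega) ?_
        rw [show 2*c.L-3+1 = c.L + (c.L-2) from by omega, Nat.add_mod_left,
          Nat.mod_eq_of_lt (by omega)]
        omega
    have hNs : (c.N (2*c.L-2)).south = (c.N (2*c.L-3)).north := by
      have := c.N_south_succ (2*c.L-3) (by omega)
      rw [show 2*c.L-3+1 = 2*c.L-2 from by omega] at this
      exact this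
    have hNnotA : c.N (2*c.L-2) ∉ c.Aset := fun hA =>
      c.B_north_ne c.Bset_eq _ hN3B (hNs.symm.trans (c.mem_Aset.mp hA).2.2)
    have hNG : c.N (2*c.L-2) ∈ c.GrayF := c.mem_GrayF.mpr
      ⟨c.N_mem _ (by omega), by rw [c.N_color _ (by omega), if_neg (by omega)]⟩
    have hEq := c.outside_unique hNG hNnotA hNnotB hCTp.1 hCTp.2.1 hCTp.2.2
    have hfin : c.diaH = c.cH j := by
      rw [← hCTw, ← hEq]
      exact hNw
    exact c.diaH_ne_cH j (by omega) hfin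

lemma Gt_north : (c.f (c.L - 2) (c.L * c.h - 2)).north = c.diaV := by
  have hLk := c.hLk; have h2w := c.h2Lw; have h2h := c.h2Lh
  have hCTs := c.CTb_south
  have hCTp := c.CTb_props
  have hSgray : (c.f (c.L-2) (c.L*c.h-1)).color = BWG.gray := by
    rw [c.col_row1 (c.L-2) (by omega), if_pos]
    rw [show c.L-2+1 = c.L-1 from by omega, Nat.mod_eq_of_lt (by omega)]
  have hSleft : (c.f (c.L-3) (c.L*c.h-1)).color = BWG.black := by
    rw [c.col_row1 (c.L-3) (by omega), if_neg]
    rw [show c.L-3+1 = c.L-2 from by omega, Nat.mod_eq_of_lt (by omega)]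
    omega
  have hSwest : (c.f (c.L-2) (c.L*c.h-1)).west = c.bulH := by
    have := c.west_bulH (c.L-3) (c.L*c.h-1) (by omega) (by omega) hSleft
    rw [show c.L-3+1 = c.L-2 from by omega] at this
    exact this
  have hSB : c.f (c.L-2) (c.L*c.h-1) ∈ c.Bset :=
    c.mem_Bset.mpr ⟨c.mem _ _ (by omega) (by omega), hSgray, hSwest⟩
  have hSs : (c.f (c.L-2) (c.L*c.h-1)).south = (c.f (c.L-2) (c.L*c.h-2)).north := by
    have := c.adjS (c.L-2) (c.L*c.h-2) (by omega) (by omega)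
    rw [show c.L*c.h-2+1 = c.L*c.h-1 from by omega] at this
    exact this
  rcases c.B_det c.Bset_eq _ hSB with h | ⟨i, hi, h⟩
  · rw [h] at hSs
    exact hSs.symm
  · exfalso
    have hMsS : (c.M (c.L-2)).south = c.cV i := by
      have h2 := c.adjS (c.L-2) (c.L*c.h-1) (by omega) (by omega)
      rw [show c.L*c.h-1+1 = c.L*c.h from by omega, h] at h2
      exact h2
    have hMnotA : c.M (c.L-2) ∉ c.Aset := fun hA =>
      c.cV_ne_bulV i (by omega) (hMsS.symm.trans (c.mem_Aset.mp hA).2.2)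
    have hMw : (c.M (c.L-2)).west = (c.M (c.L-3)).east := by
      have := c.M_west_succ (c.L-3) (by omega)
      rw [show c.L-3+1 = c.L-2 from by omega] at this
      exact this
    have hM3A : c.M (c.L-3) ∈ c.Aset := c.M_memA (c.L-3) (by omega) (by omega)
    have hMnotB : c.M (c.L-2) ∉ c.Bset := fun hB =>
      c.A_east_ne c.Aset_eq _ hM3A (hMw.symm.trans (c.mem_Bset.mp hB).2.2)
    have hMG : c.M (c.L-2) ∈ c.GrayF := c.mem_GrayF.mpr
      ⟨c.M_mem _ (by omega), by rw [c.M_color _ (by omega), if_neg (by omega)]⟩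
    have hEq := c.outside_unique hMG hMnotA hMnotB hCTp.1 hCTp.2.1 hCTp.2.2
    have hfin : c.diaV = c.cV i := by
      rw [← hCTs, ← hEq]
      exact hMsS
    exact c.diaV_ne_cV i (by omega) hfin

lemma CT_eq_Gt (x y : ℕ) (hx : x < c.w) (hy : y < c.h) :
    c.f (x * c.L + c.L - 2) (y * c.L + c.L - 2) = c.Gt := by
  have hp := c.CT_props x y hx hy
  have hEa := c.outside_unique hp.1 hp.2.1 hp.2.2 c.CTa_props.1 c.CTa_props.2.1
    c.CTa_props.2.2
  have hEb := c.outside_unique hp.1 hp.2.1 hp.2.2 c.CTb_props.1 c.CTb_props.2.1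
    c.CTb_props.2.2
  have hn : (c.f (x * c.L + c.L - 2) (y * c.L + c.L - 2)).north = c.diaV := by
    rw [hEb]; exact c.Gt_north
  have he : (c.f (x * c.L + c.L - 2) (y * c.L + c.L - 2)).east = c.diaH := by
    rw [hEa]; exact c.Gt_east
  calc c.f (x * c.L + c.L - 2) (y * c.L + c.L - 2)
      = ⟨(c.f (x * c.L + c.L - 2) (y * c.L + c.L - 2)).color,
        (c.f (x * c.L + c.L - 2) (y * c.L + c.L - 2)).north,
        (c.f (x * c.L + c.L - 2) (y * c.L + c.L - 2)).east,
        (c.f (x * c.L + c.L - 2) (y * c.L + c.L - 2)).south,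
        (c.f (x * c.L + c.L - 2) (y * c.L + c.L - 2)).west⟩ := rfl
  _ = c.Gt := by
    rw [c.CT_color x y hx hy, hn, he, c.CT_south x y hx hy, c.CT_west x y hx hy]
    rfl

end Ctx
end BGaux
namespace BGaux
namespace Ctx

variable {G : Type} [DecidableEq G] (c : Ctx G)

def targetG : Finset (Tile BWG G) :=
  ((Finset.range c.k).image c.Chor ∪ (Finset.range c.k).image c.Cver) ∪
    {c.F1t, c.F2t, c.Gt}

lemma Chor_mem (i : ℕ) (hi : i < c.k) : c.Chor i ∈ c.GrayF := by
  have hLk := c.hLk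
  have h := c.M_memA (c.k - i - 1) (by omega) (by omega)
  rw [c.M_eq_Chor (c.k - i - 1) (by omega), show c.k - (c.k - i - 1) - 1 = i from by omega]
    at h
  exact Finset.filter_subset _ _ h

lemma Cver_mem (i : ℕ) (hi : i < c.k) : c.Cver i ∈ c.GrayF := by
  have hLk := c.hLk
  have h := c.N_memB (c.k - i - 1) (by omega) (by omega)
  rw [c.N_eq_Cver (c.k - i - 1) (by omega), show c.k - (c.k - i - 1) - 1 = i from by omega]
    at h
  exact Finset.filter_subset _ _ h

lemma F1t_mem : c.F1t ∈ c.GrayF := by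
  have hLk := c.hLk
  have h := c.N_memB (c.k + 1) (by omega) (by omega)
  rw [c.F1_eq] at h
  exact Finset.filter_subset _ _ h

lemma F2t_mem : c.F2t ∈ c.GrayF := by
  have hLk := c.hLk
  have h := c.M_memA (c.k + 1) (by omega) (by omega)
  rw [c.F2_eq] at h
  exact Finset.filter_subset _ _ h

lemma Gt_mem : c.Gt ∈ c.GrayF := by
  have hww := c.hw; have hhh := c.hh
  have h := (c.CT_props 1 1 (by omega) (by omega)).1
  rw [c.CT_eq_Gt 1 1 (by omega) (by omega)] at h
  exact h

lemma F1t_ne_F2t : c.F1t ≠ c.F2t := fun h => by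
  have h' := congrArg Tile.north h; exact c.diaV_ne_bulV h'
lemma F1t_ne_Gt : c.F1t ≠ c.Gt := fun h => by
  have h' := congrArg Tile.east h; exact c.diaH_ne_bulH h'.symm
lemma F2t_ne_Gt : c.F2t ≠ c.Gt := fun h => by
  have h' := congrArg Tile.north h; exact c.diaV_ne_bulV h'.symm

lemma targetG_card : c.targetG.card = 2 * c.k + 3 := by
  have hLk := c.hLk
  have hc1 : ((Finset.range c.k).image c.Chor).card = c.k := by
    rw [Finset.card_image_of_injOn, Finset.card_range]
    intro a ha b hb hab
    simp only [Finset.coe_range, Set.mem_Iio] at ha hb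
    have h' := congrArg Tile.west hab
    have := c.cH_inj (a+1) (b+1) (by omega) (by omega) h'
    omega
  have hc2 : ((Finset.range c.k).image c.Cver).card = c.k := by
    rw [Finset.card_image_of_injOn, Finset.card_range]
    intro a ha b hb hab
    simp only [Finset.coe_range, Set.mem_Iio] at ha hb
    have h' := congrArg Tile.south hab
    have := c.cV_inj (a+1) (b+1) (by omega) (by omega) h'
    omega
  have hdisj1 : Disjoint ((Finset.range c.k).image c.Chor)
      ((Finset.range c.k).image c.Cver) := by
    rw [Finset.disjoint_left]
    rintro t ht1 ht2
    simp only [Finset.mem_image, Finset.mem_range] at ht1 ht2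
    obtain ⟨a, ha, rfl⟩ := ht1
    obtain ⟨b, hb, hh⟩ := ht2
    have h' := congrArg Tile.west hh
    exact c.cH_ne_bulH (a+1) (by omega) h'.symm
  have hc3 : ({c.F1t, c.F2t, c.Gt} : Finset (Tile BWG G)).card = 3 := by
    rw [Finset.card_insert_of_notMem, Finset.card_insert_of_notMem,
      Finset.card_singleton]
    · simp only [Finset.mem_singleton]
      exact c.F2t_ne_Gt
    · simp only [Finset.mem_insert, Finset.mem_singleton, not_or]
      exact ⟨c.F1t_ne_F2t, c.F1t_ne_Gt⟩
  have hdisj2 : Disjoint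
      ((Finset.range c.k).image c.Chor ∪ (Finset.range c.k).image c.Cver)
      ({c.F1t, c.F2t, c.Gt} : Finset (Tile BWG G)) := by
    rw [Finset.disjoint_left]
    rintro t ht1 ht2
    simp only [Finset.mem_union, Finset.mem_image, Finset.mem_range] at ht1
    simp only [Finset.mem_insert, Finset.mem_singleton] at ht2
    rcases ht1 with ⟨a, ha, rfl⟩ | ⟨a, ha, rfl⟩
    · rcases ht2 with h | h | h
      · have h' := congrArg Tile.west h
        exact c.cH_ne_bulH (a+1) (by omega) h'
      · have h' := congrArg Tile.west h
        exact c.diaH_ne_cH (a+1) (by omega) h'.symm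
      · have h' := congrArg Tile.west h
        exact c.diaH_ne_cH (a+1) (by omega) h'.symm
    · rcases ht2 with h | h | h
      · have h' := congrArg Tile.south h
        exact c.diaV_ne_cV (a+1) (by omega) h'.symm
      · have h' := congrArg Tile.west h
        exact c.diaH_ne_bulH h'.symm
      · have h' := congrArg Tile.west h
        exact c.diaH_ne_bulH h'.symm
  unfold targetG
  rw [Finset.card_union_of_disjoint hdisj2, Finset.card_union_of_disjoint hdisj1,
    hc1, hc2, hc3]
  omega

lemma targetG_sub : c.targetG ⊆ c.GrayF := by
  intro t ht
  unfold targetG at ht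
  simp only [Finset.mem_union, Finset.mem_image, Finset.mem_range, Finset.mem_insert,
    Finset.mem_singleton] at ht
  rcases ht with (⟨a, ha, rfl⟩ | ⟨a, ha, rfl⟩) | rfl | rfl | rfl
  · exact c.Chor_mem a ha
  · exact c.Cver_mem a ha
  · exact c.F1t_mem
  · exact c.F2t_mem
  · exact c.Gt_mem

lemma gray_filter_eq : c.T.tiles.filter (fun t => t.color = BWG.gray) = c.targetG := by
  have h := Finset.eq_of_subset_of_card_le c.targetG_sub
    (by rw [c.targetG_card]; exact c.grayF_card)
  exact h.symm

lemma black_filter_eq :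
    c.T.tiles.filter (fun t => t.color = BWG.black) = {c.blackT} := by
  refine Finset.eq_singleton_iff_unique_mem.mpr
    ⟨Finset.mem_filter.mpr ⟨c.blackT_mem, rfl⟩, ?_⟩
  intro t ht
  obtain ⟨htm, htc⟩ := Finset.mem_filter.mp ht
  exact c.black_unique htm htc c.blackT_mem rfl

lemma D2t_mem : c.D2t ∈ c.T.tiles := by
  have hLk := c.hLk
  rw [← c.Mk_eq_D2]
  exact c.M_mem c.k (by omega)

lemma D1t_mem : c.D1t ∈ c.T.tiles := by
  have hLk := c.hLk
  rw [← c.Nk_eq_D1]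
  exact c.N_mem c.k (by omega)

end Ctx
end BGaux

/-- Structure of the black and gray tile types: if a DTAS `Θ` self-assembles `Q`
using at most `m_b = 1` black and `m_g = 2k + 3` gray tile types, then (up to a
bijective renaming of horizontal glues and of vertical glues) the unique black
tile type has glue `•` on all four edges; the gray tile types are exactly the `k`
horizontal counter tiles, the `k` vertical counter tiles and the tiles `F₁`,
`F₂`, `G`; `Θ` contains the white tile types `D₁` and `D₂`; in every supertile the
color counters are implemented by the counter tiles and the positions `E`, `D₁`,
`D₂`, `F₁`, `F₂`, `G` carry the correspondingly named tile types; and the glues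
`•, ♦, 0, 1, …, k` are pairwise distinct. -/
theorem black_gray_tile_structure {G : Type} [DecidableEq G]
    (k w h ℓ : ℕ) (P : ℕ → ℕ → ℕ) (hI : InI k w h P) (hℓ : ℓ = 5 * k + 8)
    (Θ : RTAS BWG G) (hD : DirectedTAS Θ)
    (hb : countColor Θ BWG.black ≤ 1)
    (hg : countColor Θ BWG.gray ≤ 2 * k + 3)
    (f : ℕ → ℕ → Tile BWG G)
    (hf : IsAssignment Θ (QW k w) (QH k h) f)
    (hcol : ∀ X < QW k w, ∀ Y < QH k h, (f X Y).color = QPat k w h P X Y) :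
    ∃ (bulH diaH bulV diaV : G) (cH cV : ℕ → G),
      -- the horizontal glues •, ♦, 0, 1, …, k are pairwise distinct
      (Set.InjOn cH (Set.Iic k) ∧ bulH ≠ diaH ∧
        ∀ i ≤ k, cH i ≠ bulH ∧ cH i ≠ diaH) ∧
      -- the vertical glues •, ♦, 0, 1, …, k are pairwise distinct
      (Set.InjOn cV (Set.Iic k) ∧ bulV ≠ diaV ∧
        ∀ i ≤ k, cV i ≠ bulV ∧ cV i ≠ diaV) ∧
      -- the unique black tile type has glue • on all four edges
      Θ.tiles.filter (fun t => t.color = BWG.black)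
        = {Tile.mk BWG.black bulV bulH bulV bulH} ∧
      -- the gray tile types are exactly the counter tiles and F₁, F₂, G
      Θ.tiles.filter (fun t => t.color = BWG.gray)
        = ((Finset.range k).image fun i =>
              Tile.mk BWG.gray bulV (cH i) bulV (cH (i + 1))) ∪
          ((Finset.range k).image fun i =>
              Tile.mk BWG.gray (cV i) bulH (cV (i + 1)) bulH) ∪
          {Tile.mk BWG.gray diaV bulH diaV bulH,
            Tile.mk BWG.gray bulV diaH bulV diaH,
            Tile.mk BWG.gray diaV diaH diaV diaH} ∧
      -- Θ contains the white tile types D₁ and D₂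
      Tile.mk BWG.white diaV bulH (cV 0) bulH ∈ Θ.tiles ∧
      Tile.mk BWG.white bulV diaH bulV (cH 0) ∈ Θ.tiles ∧
      -- in every supertile, the counters and the positions D₁, D₂, F₁, F₂, G, E
      -- carry the correspondingly named tile types
      ∀ x < w, ∀ y < h,
        (∀ i, 1 ≤ i → i ≤ P x y →
          f (x * ℓ + i - 1) (y * ℓ + ℓ - 2)
            = Tile.mk BWG.gray bulV (cH (P x y - i)) bulV (cH (P x y - i + 1))) ∧
        f (x * ℓ + P x y) (y * ℓ + ℓ - 2)
          = Tile.mk BWG.white bulV diaH bulV (cH 0) ∧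
        (∀ i, P x y + 2 ≤ i → i ≤ ℓ - 2 →
          f (x * ℓ + i - 1) (y * ℓ + ℓ - 2)
            = Tile.mk BWG.gray bulV diaH bulV diaH) ∧
        f (x * ℓ + ℓ - 2) (y * ℓ + ℓ - 2)
          = Tile.mk BWG.gray diaV diaH diaV diaH ∧
        (∀ j, 1 ≤ j → j ≤ P x y →
          f (x * ℓ + ℓ - 2) (y * ℓ + j - 1)
            = Tile.mk BWG.gray (cV (P x y - j)) bulH (cV (P x y - j + 1)) bulH) ∧
        f (x * ℓ + ℓ - 2) (y * ℓ + P x y)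
          = Tile.mk BWG.white diaV bulH (cV 0) bulH ∧
        (∀ j, P x y + 2 ≤ j → j ≤ ℓ - 2 →
          f (x * ℓ + ℓ - 2) (y * ℓ + j - 1)
            = Tile.mk BWG.gray diaV bulH diaV bulH) ∧
        (∀ i j, 1 ≤ i → i ≤ ℓ - 2 → 1 ≤ j → j ≤ ℓ - 2 →
          f (x * ℓ + i - 1) (y * ℓ + j - 1)
            = Tile.mk BWG.black bulV bulH bulV bulH) := by
  obtain ⟨F, ρ, hwF, hh6, hbij, hPeq⟩ := hI
  subst hℓ
  have hw45 : 45 ≤ w := by rw [hwF]; unfold widthF; omega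
  have hPin : ∀ x, x < w → ∀ y, y < h → 1 ≤ P x y ∧ P x y ≤ k := by
    intro x hx y hy
    have hmem : patF F x y ∈ colorsOf (widthF F) 6 (patF F) := by
      unfold colorsOf
      refine Finset.mem_image.mpr ⟨(x, y), ?_, rfl⟩
      rw [Finset.mem_product]
      constructor <;> rw [Finset.mem_range] <;> omega
    have hIcc := hbij.mapsTo hmem
    rw [hPeq x hx y hy]
    exact ⟨hIcc.1, hIcc.2⟩
  have hk1 : 1 ≤ k := by
    have := hPin 0 (by omega) 0 (by omega)
    omega
  let c : BGaux.Ctx G := ⟨k, w, h, P, Θ, f, hk1, by omega, by omega,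
    fun x hx y hy => (hPin x hx y hy).1,
    fun x hx y hy => (hPin x hx y hy).2,
    hD, hb, hg, hf, hcol⟩
  refine ⟨c.bulH, c.diaH, c.bulV, c.diaV, c.cH, c.cV, ?_, ?_, ?_, ?_, ?_, ?_, ?_⟩
  · refine ⟨?_, ?_, ?_⟩
    · intro i hi j hj heq
      exact c.cH_inj i j (Set.mem_Iic.mp hi) (Set.mem_Iic.mp hj) heq
    · exact c.diaH_ne_bulH.symm
    · intro i hi
      exact ⟨c.cH_ne_bulH i hi, (c.diaH_ne_cH i hi).symm⟩
  · refine ⟨?_, ?_, ?_⟩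
    · intro i hi j hj heq
      exact c.cV_inj i j (Set.mem_Iic.mp hi) (Set.mem_Iic.mp hj) heq
    · exact c.diaV_ne_bulV.symm
    · intro i hi
      exact ⟨c.cV_ne_bulV i hi, (c.diaV_ne_cV i hi).symm⟩
  · exact c.black_filter_eq
  · exact c.gray_filter_eq
  · exact c.D1t_mem
  · exact c.D2t_mem
  · intro x hx y hy
    have hLk := c.hLk
    refine ⟨?_, ?_, ?_, ?_, ?_, ?_, ?_, ?_⟩
    · intro i h1 h2
      exact c.T_pre x y hx hy i h1 h2
    · have := (c.T_D2_aux x y hx hy).1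
      rw [show x * c.L + (c.P x y + 1) - 1 = x * c.L + c.P x y from by omega] at this
      exact this
    · intro i h1 h2
      exact c.T_F2 x y hx hy i h1 h2
    · exact c.CT_eq_Gt x y hx hy
    · intro j h1 h2
      exact c.C_pre x y hx hy j h1 h2
    · have := (c.C_D1_aux x y hx hy).1
      rw [show y * c.L + (c.P x y + 1) - 1 = y * c.L + c.P x y from by omega] at this
      exact this
    · intro j h1 h2
      exact c.C_F1 x y hx hy j h1 h2
    · intro i j h1 h2 h3 h4
      have hcolb : (f (x * (5*k+8) + i - 1) (y * (5*k+8) + j - 1)).color = BWG.black :=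
        c.black_at x y i j hx hy h1 h2 h3 h4
      have hb1 := BGaux.nat_mul_bound (L := 5*k+8) hx (show i < 5*k+8 from by omega)
      have hb2 := BGaux.nat_mul_bound (L := 5*k+8) hy (show j < 5*k+8 from by omega)
      have hX : x * (5*k+8) + i - 1 < (5*k+8) * w + 2 := by omega
      have hY : y * (5*k+8) + j - 1 < (5*k+8) * h + 2 := by omega
      exact c.black_eq _ _ hX hY hcolb
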